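/- arXiv:2204.07516 — 10 statements merged into one kernel-verified Lean document; each statement's English description precedes it below -/
import Mathlib

section
/- If ρ is a continuous substitution on a compact Hausdorff alphabet and there exists a letter a with |ρ^n(a)| → ∞, then the associated subshift X_ρ is non-empty. -/
open Filter Topology

/-- The left shift on bi-infinite sequences. -/
def shift {A : Type*} (w : ℤ → A) : ℤ → A := fun i => w (i + 1)

/-- The finite subword of `w` of length `n` starting at position `j`. -/
def word {A : Type*} (w : ℤ → A) (j : ℤ) (n : ℕ) : List A :=
  (List.range n).map fun i => w (j + (i : ℤ))

/-- The subshift determined by a language `L ⊆ A*`. -/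
def subshiftOf {A : Type*} (L : Set (List A)) : Set (ℤ → A) :=
  {w | ∀ (j : ℤ) (n : ℕ), word w j n ∈ L}

/-- The set of finite subwords of a bi-infinite sequence. -/
def subwordsOf {A : Type*} (w : ℤ → A) : Set (List A) :=
  {u | ∃ (j : ℤ) (n : ℕ), u = word w j n}

/-- The language of a bi-infinite sequence: the closure of its set of finite subwords. -/
def langOfSeq {A : Type*} [TopologicalSpace A] (w : ℤ → A) : Set (List A) :=
  closure (subwordsOf w)

/-- The shift orbit of a bi-infinite sequence. -/
def orbit {A : Type*} (w : ℤ → A) : Set (ℤ → A) :=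
  {x | ∃ k : ℤ, x = fun i => w (i + k)}

/-- Application of a substitution to a finite word, by concatenation. -/
def substWord {A : Type*} (ρ : A → List A) (u : List A) : List A := u.flatMap ρ

/-- The `n`-th iterated substitute (level-`n` supertile) of a letter. -/
def substIter {A : Type*} (ρ : A → List A) (n : ℕ) (a : A) : List A :=
  (substWord ρ)^[n] [a]

/-- The language of a substitution: closure of the set of words generated by `ρ`. -/
def lang {A : Type*} [TopologicalSpace A] (ρ : A → List A) : Set (List A) :=
  closure {u : List A | ∃ (a : A) (k : ℕ), u <:+: substIter ρ k a}

/-- The legal `n`-letter words of a substitution. -/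
def langN {A : Type*} [TopologicalSpace A] (ρ : A → List A) (n : ℕ) : Set (List A) :=
  closure {u : List A | u.length = n ∧ ∃ (a : A) (k : ℕ), u <:+: substIter ρ k a}

/-- Primitivity of a substitution on a topological alphabet. -/
def Primitive {A : Type*} [TopologicalSpace A] (ρ : A → List A) : Prop :=
  ∀ U : Set A, IsOpen U → U.Nonempty → ∃ p : ℕ, ∀ a : A, ∃ b ∈ substIter ρ p a, b ∈ U

/-- `y` is the image of the bi-infinite sequence `w` under the substitution `ρ`,
with the image of `w 0` starting at position `0`. -/
def IsSubstOf {A : Type*} (ρ : A → List A) (w y : ℤ → A) : Prop :=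
  ∃ o : ℤ → ℤ, o 0 = 0 ∧ (∀ k : ℤ, o (k + 1) = o k + (ρ (w k)).length) ∧
    ∀ (k : ℤ) (i : ℕ) (h : i < (ρ (w k)).length), y (o k + (i : ℤ)) = (ρ (w k)).get ⟨i, h⟩

lemma word_eq {A : Type*} (w : ℤ → A) (j : ℤ) (n : ℕ) :
    word w j n = (List.range n).map (fun i : ℕ => w (j + (i:ℤ))) := by
  unfold word
  simp only [List.pure_def, List.bind_eq_flatMap, ← List.map_eq_flatMap, List.map_map]
  rfl

lemma slice_eq {A : Type*} (u : List A) (d : A) (s n : ℕ) (h : s + n ≤ u.length) :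
    (List.range n).map (fun i => u.getD (s + i) d) = (u.drop s).take n := by
  apply List.ext_getElem
  · simp; omega
  · intro i h1 h2
    simp only [List.getElem_map, List.getElem_range, List.getElem_take, List.getElem_drop]
    rw [List.getD_eq_getElem]

lemma tendsto_word {A : Type*} [TopologicalSpace A] {x : ℕ → ℤ → A} {w : ℤ → A}
    {l : Filter ℕ} (h : Tendsto x l (𝓝 w)) (j : ℤ) (n : ℕ) :
    Tendsto (fun k => word (x k) j n) l (𝓝 (word w j n)) := by
  have key : ∀ L : List ℤ, Tendsto (fun k => L.map (x k)) l (𝓝 (L.map w)) := by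
    intro L
    induction L with
    | nil => simpa using tendsto_const_nhds
    | cons i L ih =>
        simpa using Filter.Tendsto.cons (tendsto_pi_nhds.mp h i) ih
  have := key ((List.range n).map (fun i => j + (i : ℤ)))
  simpa [word, List.map_map, Function.comp_def] using this

/-- If `ρ` is a continuous substitution on a compact Hausdorff alphabet and some letter `a`
satisfies `|ρ^n(a)| → ∞`, then the substitution subshift `X_ρ` is non-empty. -/
theorem stmt8 {A : Type*} [TopologicalSpace A] [CompactSpace A] [T2Space A]
    (ρ : A → List A) (hρ : Continuous ρ) (h1 : ∀ a : A, 1 ≤ (ρ a).length)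
    (hgrow : ∃ a : A, Tendsto (fun n : ℕ => (substIter ρ n a).length) atTop atTop) :
    (subshiftOf (lang ρ)).Nonempty := by
  obtain ⟨a, hm⟩ := hgrow
  set m : ℕ → ℕ := fun k => (substIter ρ k a).length with hmdef
  -- centered approximants
  set x : ℕ → ℤ → A := fun k i => (substIter ρ k a).getD ((m k / 2 : ℤ) + i).toNat a with hxdef
  -- ultrafilter limit
  let U : Ultrafilter ℕ := Ultrafilter.of atTop
  have hU : (U : Filter ℕ) ≤ atTop := Ultrafilter.of_le _
  obtain ⟨w, -, hw⟩ := CompactSpace.isCompact_univ.ultrafilter_le_nhds (U.map x)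
    (by simp)
  have hxw : Tendsto x (U : Filter ℕ) (𝓝 w) := hw
  refine ⟨w, fun j n => ?_⟩
  have hmU : Tendsto m (U : Filter ℕ) atTop := hm.mono_left hU
  refine mem_closure_of_tendsto (tendsto_word hxw j n) ?_
  have hev : ∀ᶠ k in (U : Filter ℕ), 2 * (j.natAbs + n) ≤ m k :=
    hmU.eventually_ge_atTop _
  filter_upwards [hev] with k hk
  have hc0 : (0 : ℤ) ≤ (m k / 2 : ℕ) + j := by omega
  set s : ℕ := ((m k / 2 : ℕ) + j).toNat with hsdef
  have hs : s + n ≤ m k := by omega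
  have : word (x k) j n = (List.range n).map (fun i => (substIter ρ k a).getD (s + i) a) := by
    rw [word_eq]
    apply List.map_congr_left
    intro i hi
    simp only [hxdef]
    congr 1
    omega
  rw [this, slice_eq _ a s n hs]
  exact ⟨a, k, ((List.take_prefix _ _).isInfix).trans ((List.drop_suffix _ _).isInfix)⟩
end

section
/- Every element of the subshift of a continuous substitution admits a supertiling decomposition: for every w ∈ X_ρ there exists x ∈ X_ρ and 0 ≤ i ≤ |ρ(x_0)| − 1 with σ^i(ρ(x)) = w. -/
set_option linter.unusedSectionVars false
set_option maxHeartbeats 1000000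


open Filter Topology

section ListTop
variable {A : Type*} [TopologicalSpace A]

theorem nhds_cons_eq (a : A) (l : List A) :
    𝓝 (a :: l) = (𝓝 a ×ˢ 𝓝 l).map fun p : A × List A => p.1 :: p.2 := by
  simp only [nhds_cons, Filter.prod_eq, ← Filter.map_def, ← Filter.seq_eq_filter_seq]
  simp [-Filter.map_def, Function.comp_def, functor_norm]

theorem continuous_ofFn : ∀ {n : ℕ}, Continuous fun v : Fin n → A => List.ofFn v := by
  intro n
  induction n with
  | zero => simpa using continuous_const
  | succ m ih =>
    have h : (fun v : Fin (m+1) → A => List.ofFn v)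
        = fun v => (v 0) :: List.ofFn (fun i : Fin m => v i.succ) := by
      funext v; exact List.ofFn_succ
    rw [h]
    exact List.continuous_cons.comp ((continuous_apply 0).prodMk
      (ih.comp (continuous_pi fun i => continuous_apply _)))

theorem nhds_ofFn : ∀ {n : ℕ} (v : Fin n → A), 𝓝 (List.ofFn v) = Filter.map List.ofFn (𝓝 v) := by
  intro n
  induction n with
  | zero =>
    intro v
    have hv : 𝓝 v = pure v := by
      refine le_antisymm ?_ (pure_le_nhds v)
      intro s hs
      have : v ∈ s := hs
      have huniv : (Set.univ : Set (Fin 0 → A)) ⊆ s := by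
        intro x _
        have : x = v := Subsingleton.elim x v
        rwa [this]
      exact mem_of_superset univ_mem huniv
    simp [hv, List.ofFn_zero, nhds_nil]
  | succ m ih =>
    intro v
    have hsplit : Filter.map (fun p : A × (Fin m → A) => Fin.cons p.1 p.2)
        (𝓝 (v 0) ×ˢ 𝓝 (fun i : Fin m => v i.succ)) ≤ 𝓝 v := by
      have hcont : Continuous fun p : A × (Fin m → A) => (Fin.cons p.1 p.2 : Fin (m+1) → A) := by
        refine continuous_pi fun i => ?_
        refine Fin.cases ?_ ?_ i
        · simpa using continuous_fst
        · intro j; simp only [Fin.cons_succ]; exact (continuous_apply j).comp continuous_snd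
      have hv' : (Fin.cons (v 0) (fun i : Fin m => v i.succ) : Fin (m+1) → A) = v := by
        funext i; refine Fin.cases ?_ ?_ i <;> simp
      have := hcont.continuousAt (x := ((v 0, fun i : Fin m => v i.succ) : A × (Fin m → A)))
      rw [ContinuousAt, nhds_prod_eq] at this
      have h' : Tendsto (fun p : A × (Fin m → A) => (Fin.cons p.1 p.2 : Fin (m+1) → A))
          (𝓝 (v 0) ×ˢ 𝓝 fun i : Fin m => v i.succ) (𝓝 v) := by simpa [hv'] using this
      exact h'
    refine le_antisymm ?_ (continuous_ofFn.continuousAt (x := v))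
    have hv : List.ofFn v = v 0 :: List.ofFn (fun i : Fin m => v i.succ) := List.ofFn_succ
    rw [hv, nhds_cons_eq, ih]
    rw [Filter.prod_map_right, Filter.map_map]
    have hcomp : ((fun p : A × List A => p.1 :: p.2) ∘ (Prod.map id List.ofFn : A × (Fin m → A) → A × List A))
        = List.ofFn ∘ (fun p : A × (Fin m → A) => Fin.cons p.1 p.2) := by
      funext p
      simp only [Function.comp_apply, Prod.map_apply, id_eq]
      rw [List.ofFn_succ]
      congr 1
    rw [hcomp, ← Filter.map_map]
    exact Filter.map_mono hsplit


theorem continuous_list_length : Continuous (List.length : List A → ℕ) :=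
  continuous_iff_continuousAt.mpr fun l => List.continuousAt_length l

theorem mem_closure_tuple {S : Set (List A)} {u : List A} (h : u ∈ closure S) :
    (fun i : Fin u.length => u.get i) ∈
      closure {v : Fin u.length → A | List.ofFn v ∈ S} := by
  set vu : Fin u.length → A := fun i => u.get i with hvu
  have hofn : List.ofFn vu = u := by
    simp [hvu, List.ofFn_getElem, List.get_eq_getElem]
  rw [mem_closure_iff_nhds]
  intro t ht
  have hnu : 𝓝 u = Filter.map List.ofFn (𝓝 vu) := by
    have h2 := nhds_ofFn vu
    rwa [hofn] at h2
  have hmap : List.ofFn '' t ∈ 𝓝 u := by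
    rw [hnu]
    exact Filter.image_mem_map ht
  rw [mem_closure_iff_nhds] at h
  obtain ⟨l, hl1, hl2⟩ := h _ hmap
  obtain ⟨p, hp, hpl⟩ := hl1
  exact ⟨p, hp, by simpa [hpl] using hl2⟩

theorem continuous_getD (i : ℕ) (a₀ : A) : Continuous fun u : List A => u.getD i a₀ := by
  rw [continuous_iff_continuousAt]
  intro l
  have hofn : List.ofFn (fun j : Fin l.length => l.get j) = l := by
    simp [List.ofFn_getElem, List.get_eq_getElem]
  have hnu : 𝓝 l = Filter.map List.ofFn (𝓝 (fun j : Fin l.length => l.get j)) := by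
    have h2 := nhds_ofFn (fun j : Fin l.length => l.get j)
    rwa [hofn] at h2
  rw [ContinuousAt, hnu, Filter.tendsto_map'_iff]
  by_cases h : i < l.length
  · have hfun : ((fun u : List A => u.getD i a₀) ∘ List.ofFn) =
        fun v : Fin l.length → A => v ⟨i, h⟩ := by
      funext v
      have hlen : i < (List.ofFn v).length := by simpa using h
      rw [Function.comp_apply, List.getD_eq_getElem _ _ hlen, List.getElem_ofFn]
    rw [hfun]
    have hpt : l.getD i a₀ = l.get ⟨i, h⟩ := by
      rw [List.getD_eq_getElem _ _ h]; rfl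
    rw [hpt]
    exact (continuous_apply _).continuousAt
  · have hfun : ((fun u : List A => u.getD i a₀) ∘ List.ofFn) =
        fun _ : Fin l.length → A => a₀ := by
      funext v
      rw [Function.comp_apply, List.getD_eq_default]
      simpa using Nat.le_of_not_lt h
    have hpt : l.getD i a₀ = a₀ := by
      rw [List.getD_eq_default]; exact Nat.le_of_not_lt h
    rw [hfun, hpt]
    exact tendsto_const_nhds

theorem word_eq_map (w : ℤ → A) (j : ℤ) (m : ℕ) :
    word w j m = (List.range m).map (fun a : ℕ => w (j + (a : ℤ))) := by
  rw [word]
  have h : ∀ l : List ℕ, (l >>= fun a => (pure ((a : ℤ)) : List ℤ)) = l.map (fun a : ℕ => (a : ℤ)) := by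
    intro l
    induction l with
    | nil => rfl
    | cons b t ih => simp only [List.map_cons, ← ih]; rfl
  rw [h, List.map_map]
  rfl

theorem word_eq_ofFn {w : ℤ → A} {j : ℤ} {m : ℕ} :
    word w j m = List.ofFn (fun i : Fin m => w (j + (i : ℤ))) := by
  rw [word_eq_map]
  apply List.ext_getElem
  · simp
  · intro n h1 h2
    simp

theorem word_length (w : ℤ → A) (j : ℤ) (m : ℕ) : (word w j m).length = m := by
  rw [word_eq_map]; simp

theorem word_getD (w : ℤ → A) (j : ℤ) {m n : ℕ} (h : n < m) (a₀ : A) :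
    (word w j m).getD n a₀ = w (j + (n : ℤ)) := by
  have hl : n < (word w j m).length := by rw [word_length]; exact h
  rw [List.getD_eq_getElem _ _ hl]
  simp only [word_eq_map, List.getElem_map, List.getElem_range]

theorem continuous_word (j : ℤ) (m : ℕ) :
    Continuous fun x : ℤ → A => word x j m := by
  have : (fun x : ℤ → A => word x j m) =
      (fun v : Fin m → A => List.ofFn v) ∘ fun x (i : Fin m) => x (j + (i : ℤ)) := by
    funext x; exact word_eq_ofFn
  rw [this]
  exact continuous_ofFn.comp (continuous_pi fun i => continuous_apply _)

theorem cont_eval {X : Type*} [TopologicalSpace X] {g : X → ℤ → A} {f : X → ℤ}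
    (hg : Continuous g) (hf : Continuous f) : Continuous fun x => g x (f x) := by
  rw [continuous_iff_continuousAt]
  intro x₀
  have hev : ∀ᶠ x in 𝓝 x₀, f x = f x₀ := by
    have : IsOpen {x | f x = f x₀} := (isOpen_discrete {f x₀}).preimage hf
    exact this.mem_nhds rfl
  apply ContinuousAt.congr (f := fun x => g x (f x₀))
  · exact ((continuous_apply (f x₀)).comp hg).continuousAt
  · filter_upwards [hev] with x hx
    rw [hx]

end ListTop

section Oseq
variable {A : Type*} (ρ : A → List A)

/-- Canonical offset sequence of `x` under `ρ`. -/
def oseq (x : ℤ → A) (k : ℤ) : ℤ :=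
  (∑ t ∈ Finset.range k.toNat, ((ρ (x (t : ℤ))).length : ℤ))
    - ∑ t ∈ Finset.range (-k).toNat, ((ρ (x (-((t : ℤ) + 1)))).length : ℤ)

@[simp] theorem oseq_zero (x : ℤ → A) : oseq ρ x 0 = 0 := by simp [oseq]

theorem oseq_succ (x : ℤ → A) (k : ℤ) :
    oseq ρ x (k + 1) = oseq ρ x k + ((ρ (x k)).length : ℤ) := by
  rcases le_or_gt 0 k with hk | hk
  · have h1 : (k + 1).toNat = k.toNat + 1 := by omega
    have h2 : (-(k + 1)).toNat = 0 := by omega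
    have h3 : (-k).toNat = 0 := by omega
    have h4 : ((k.toNat : ℤ)) = k := by omega
    simp only [oseq, h1, h2, h3, Finset.sum_range_succ, Finset.range_zero,
      Finset.sum_empty, h4]
    ring
  · have h1 : (k + 1).toNat = 0 := by omega
    have h2 : k.toNat = 0 := by omega
    have h3 : (-k).toNat = (-(k + 1)).toNat + 1 := by omega
    have h4 : (((-(k + 1)).toNat : ℤ)) = -(k + 1) := by omega
    simp only [oseq, h1, h2, h3, Finset.sum_range_succ, Finset.range_zero,
      Finset.sum_empty, h4]
    have h5 : -(-(k + 1) + 1) = k := by ring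
    rw [h5]
    ring

variable (h1 : ∀ a : A, 1 ≤ (ρ a).length)
include h1

theorem oseq_add_le (x : ℤ → A) (k : ℤ) (d : ℕ) :
    oseq ρ x k + d ≤ oseq ρ x (k + d) := by
  induction d with
  | zero => simp
  | succ m ih =>
    have hs := oseq_succ ρ x (k + m)
    have hlen := h1 (x (k + m))
    push_cast
    push_cast at ih
    have : k + (m + 1 : ℤ) = (k + m) + 1 := by ring
    rw [this, hs]
    omega

theorem oseq_mono (x : ℤ → A) {k k' : ℤ} (h : k ≤ k') :
    oseq ρ x k + (k' - k) ≤ oseq ρ x k' := by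
  have hd : k' = k + ((k' - k).toNat : ℤ) := by omega
  have := oseq_add_le ρ h1 x k (k' - k).toNat
  rw [← hd] at this
  omega

theorem oseq_le_of_le (x : ℤ → A) {k k' : ℤ} (h : k ≤ k') : oseq ρ x k ≤ oseq ρ x k' := by
  have := oseq_mono ρ h1 x h
  omega

theorem exists_block (x : ℤ → A) (p : ℤ) :
    ∃ k : ℤ, oseq ρ x k ≤ p ∧ p < oseq ρ x (k + 1) := by
  have hbdd : ∃ b : ℤ, ∀ z : ℤ, oseq ρ x z ≤ p → z ≤ b := by
    refine ⟨p.natAbs + 1, fun z hz => ?_⟩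
    by_contra hc
    push_neg at hc
    have h0 : (0 : ℤ) ≤ p.natAbs + 1 := by positivity
    have := oseq_mono ρ h1 x (show (0:ℤ) ≤ z by omega)
    simp only [oseq_zero] at this
    omega
  have hinh : ∃ z : ℤ, oseq ρ x z ≤ p := by
    refine ⟨-(p.natAbs + 1), ?_⟩
    have := oseq_mono ρ h1 x (show -((p.natAbs : ℤ) + 1) ≤ 0 by omega)
    simp only [oseq_zero] at this
    omega
  obtain ⟨k, hk1, hk2⟩ := Int.exists_greatest_of_bdd hbdd hinh
  refine ⟨k, hk1, ?_⟩
  by_contra hc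
  push_neg at hc
  have := hk2 (k + 1) hc
  omega

theorem block_unique (x : ℤ → A) {p k k' : ℤ}
    (h : oseq ρ x k ≤ p ∧ p < oseq ρ x (k + 1))
    (h' : oseq ρ x k' ≤ p ∧ p < oseq ρ x (k' + 1)) : k = k' := by
  by_contra hne
  rcases lt_or_gt_of_ne hne with hlt | hlt
  · have : oseq ρ x (k + 1) ≤ oseq ρ x k' := oseq_le_of_le ρ h1 x (by omega)
    omega
  · have : oseq ρ x (k' + 1) ≤ oseq ρ x k := oseq_le_of_le ρ h1 x (by omega)
    omega

/-- Block index of position `p`. -/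
noncomputable def blockIdx (x : ℤ → A) (p : ℤ) : ℤ :=
  Classical.choose (exists_block ρ h1 x p)

theorem blockIdx_spec (x : ℤ → A) (p : ℤ) :
    oseq ρ x (blockIdx ρ h1 x p) ≤ p ∧ p < oseq ρ x (blockIdx ρ h1 x p + 1) :=
  Classical.choose_spec (exists_block ρ h1 x p)

theorem blockIdx_eq (x : ℤ → A) {p k : ℤ} (hk : oseq ρ x k ≤ p ∧ p < oseq ρ x (k + 1)) :
    blockIdx ρ h1 x p = k :=
  block_unique ρ h1 x (blockIdx_spec ρ h1 x p) hk

/-- Decoding: the substitution image of `x`. -/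
noncomputable def decode (a₀ : A) (x : ℤ → A) (p : ℤ) : A :=
  (ρ (x (blockIdx ρ h1 x p))).getD (p - oseq ρ x (blockIdx ρ h1 x p)).toNat a₀

theorem decode_spec (a₀ : A) (x : ℤ → A) (k : ℤ) (i : ℕ) (hi : i < (ρ (x k)).length) :
    decode ρ h1 a₀ x (oseq ρ x k + (i : ℤ)) = (ρ (x k)).get ⟨i, hi⟩ := by
  have hb : blockIdx ρ h1 x (oseq ρ x k + (i : ℤ)) = k := by
    apply blockIdx_eq
    constructor
    · omega
    · rw [oseq_succ]
      omega
  rw [decode, hb]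
  have : (oseq ρ x k + (i : ℤ) - oseq ρ x k).toNat = i := by omega
  rw [this, List.getD_eq_getElem _ _ hi]
  rfl

end Oseq

section Blocks
variable {A : Type*} (ρ : A → List A)

/-- Offsets of blocks inside `substWord ρ V`. -/
def Ot (V : List A) (t : ℕ) : ℕ := (substWord ρ (V.take t)).length

@[simp] theorem Ot_zero (V : List A) : Ot ρ V 0 = 0 := by simp [Ot, substWord]

theorem Ot_succ (V : List A) {t : ℕ} (h : t < V.length) :
    Ot ρ V (t + 1) = Ot ρ V t + (ρ (V[t]'h)).length := by
  unfold Ot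
  rw [List.take_succ, List.getElem?_eq_getElem h]
  simp only [substWord, List.flatMap_append, List.length_append, Option.toList_some,
    List.flatMap_cons, List.flatMap_nil, List.append_nil]

theorem Ot_total (V : List A) : Ot ρ V V.length = (substWord ρ V).length := by
  simp [Ot]

theorem split_at_block (V : List A) {t : ℕ} (h : t < V.length) :
    substWord ρ V = substWord ρ (V.take t) ++ (ρ (V[t]'h) ++ substWord ρ (V.drop (t + 1))) := by
  conv_lhs => rw [← List.take_append_drop t V, List.drop_eq_getElem_cons h]
  simp only [substWord, List.flatMap_append, List.flatMap_cons]

theorem getD_substWord (V : List A) {t q : ℕ} (h : t < V.length)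
    (h1q : Ot ρ V t ≤ q) (h2q : q < Ot ρ V (t + 1)) (a₀ : A) :
    (substWord ρ V).getD q a₀ = (ρ (V[t]'h)).getD (q - Ot ρ V t) a₀ := by
  have hlt : q - Ot ρ V t < (ρ (V[t]'h)).length := by
    have := Ot_succ ρ V h
    omega
  rw [split_at_block ρ V h]
  have hq2 : q < (substWord ρ (V.take t)).length + ((ρ (V[t]'h)).length + (substWord ρ (V.drop (t+1))).length) := by
    have hOt : (substWord ρ (V.take t)).length = Ot ρ V t := rfl
    omega
  rw [List.getD_eq_getElem _ _ (by simpa using hq2)]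
  rw [List.getElem_append_right (by simpa [Ot] using h1q)]
  rw [List.getElem_append_left (by simpa [Ot] using hlt)]
  rw [List.getD_eq_getElem _ _ hlt]
  rfl

variable {M : ℕ}

theorem Ot_add_lower (V : List A) (hlen1 : ∀ a : A, 1 ≤ (ρ a).length)
    {t r : ℕ} (h : t + r ≤ V.length) : Ot ρ V t + r ≤ Ot ρ V (t + r) := by
  induction r with
  | zero => simp
  | succ m ih =>
    have h1 : t + m < V.length := by omega
    have := Ot_succ ρ V h1
    have := hlen1 (V[t + m]'h1)
    have := ih (by omega)
    show Ot ρ V t + (m + 1) ≤ Ot ρ V ((t + m) + 1)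
    omega

theorem Ot_add_upper (V : List A) (hlenM : ∀ a : A, (ρ a).length ≤ M)
    {t r : ℕ} (h : t + r ≤ V.length) : Ot ρ V (t + r) ≤ Ot ρ V t + r * M := by
  induction r with
  | zero => simp
  | succ m ih =>
    have h1 : t + m < V.length := by omega
    have := Ot_succ ρ V h1
    have := hlenM (V[t + m]'h1)
    have := ih (by omega)
    have : (m + 1) * M = m * M + M := by ring
    show Ot ρ V ((t + m) + 1) ≤ Ot ρ V t + (m + 1) * M
    omega

theorem exists_blockL (V : List A) {q : ℕ} (hq : q < (substWord ρ V).length) :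
    ∃ t : ℕ, ∃ ht : t < V.length, Ot ρ V t ≤ q ∧ q < Ot ρ V (t + 1) := by
  classical
  set P : ℕ → Prop := fun t => Ot ρ V t ≤ q with hP
  have hP0 : P 0 := by simp [hP]
  set t := Nat.findGreatest P V.length with htdef
  have hPt : P t := Nat.findGreatest_spec (Nat.zero_le _) hP0
  have htle : t ≤ V.length := Nat.findGreatest_le _
  have htlt : t < V.length := by
    rcases Nat.lt_or_ge t V.length with h | h
    · exact h
    · exfalso
      have : t = V.length := by omega
      rw [this] at hPt
      simp only [hP, Ot_total] at hPt
      omega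
  refine ⟨t, htlt, hPt, ?_⟩
  by_contra hc
  push_neg at hc
  exact Nat.findGreatest_is_greatest (Nat.lt_succ_self t) (by omega) hc

end Blocks


section Main
variable {A : Type*} [TopologicalSpace A] (ρ : A → List A)

def rawS : Set (List A) := {u : List A | ∃ (a : A) (k : ℕ), u <:+: substIter ρ k a}

theorem lang_eq_closure_rawS : lang ρ = closure (rawS ρ) := rfl

theorem rawS_subset_lang : rawS ρ ⊆ lang ρ := subset_closure

theorem isClosed_lang : IsClosed (lang ρ) := isClosed_closure

def CsetA1 (n : ℕ) : Set ((ℤ → A) × ((ℤ → A) × (ℤ → A))) :=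
  ⋂ (j : ℤ) (m : ℕ) (_ : -(n:ℤ) ≤ j) (_ : j + (m:ℤ) ≤ (n:ℤ)),
    {q : (ℤ → A) × ((ℤ → A) × (ℤ → A)) | word q.2.1 j m ∈ lang ρ}

def CsetA2 (a₀ : A) (n : ℕ) : Set ((ℤ → A) × ((ℤ → A) × (ℤ → A))) :=
  ⋂ (k : ℤ) (_ : -(n:ℤ) ≤ k) (_ : k ≤ (n:ℤ)) (i : ℕ),
    ({q : (ℤ → A) × ((ℤ → A) × (ℤ → A)) | (ρ (q.2.1 k)).length ≤ i} ∪
      ({q : (ℤ → A) × ((ℤ → A) × (ℤ → A)) | i < (ρ (q.2.1 k)).length} ∩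
        {q : (ℤ → A) × ((ℤ → A) × (ℤ → A)) |
          q.2.2 (oseq ρ q.2.1 k + (i:ℤ)) = (ρ (q.2.1 k)).getD i a₀}))

def CsetA3 (M n : ℕ) : Set ((ℤ → A) × ((ℤ → A) × (ℤ → A))) :=
  ⋃ i ∈ Finset.range (M + 1),
    ({q : (ℤ → A) × ((ℤ → A) × (ℤ → A)) | i < (ρ (q.2.1 0)).length} ∩
      ⋂ (j : ℤ) (_ : -(n:ℤ) ≤ j) (_ : j ≤ (n:ℤ)),
        {q : (ℤ → A) × ((ℤ → A) × (ℤ → A)) | q.2.2 (j + (i:ℤ)) = q.1 j})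

def Cset (M : ℕ) (a₀ : A) (n : ℕ) : Set ((ℤ → A) × ((ℤ → A) × (ℤ → A))) :=
  CsetA1 ρ n ∩ (CsetA2 ρ a₀ n ∩ CsetA3 ρ M n)

theorem mem_Cset_iff {M : ℕ} {a₀ : A} {n : ℕ} {q : (ℤ → A) × ((ℤ → A) × (ℤ → A))} :
    q ∈ Cset ρ M a₀ n ↔
      (∀ (j : ℤ) (m : ℕ), -(n:ℤ) ≤ j → j + (m:ℤ) ≤ (n:ℤ) → word q.2.1 j m ∈ lang ρ) ∧
      (∀ k : ℤ, -(n:ℤ) ≤ k → k ≤ (n:ℤ) → ∀ i : ℕ,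
        (ρ (q.2.1 k)).length ≤ i ∨
          (i < (ρ (q.2.1 k)).length ∧
            q.2.2 (oseq ρ q.2.1 k + (i:ℤ)) = (ρ (q.2.1 k)).getD i a₀)) ∧
      (∃ i : ℕ, i < M + 1 ∧ i < (ρ (q.2.1 0)).length ∧
        ∀ j : ℤ, -(n:ℤ) ≤ j → j ≤ (n:ℤ) → q.2.2 (j + (i:ℤ)) = q.1 j) := by
  simp only [Cset, CsetA1, CsetA2, CsetA3, Set.mem_inter_iff, Set.mem_iInter,
    Set.mem_iUnion, Set.mem_union, Set.mem_setOf_eq, Finset.mem_range, exists_prop]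

variable {ρ}

theorem continuous_x_coord (k : ℤ) :
    Continuous fun q : (ℤ → A) × ((ℤ → A) × (ℤ → A)) => q.2.1 k :=
  (continuous_apply k).comp (continuous_fst.comp continuous_snd)

theorem isClosed_Cset [T2Space A] (hρ : Continuous ρ) (M : ℕ) (a₀ : A) (n : ℕ) :
    IsClosed (Cset ρ M a₀ n) := by
  have hx : Continuous fun q : (ℤ → A) × ((ℤ → A) × (ℤ → A)) => q.2.1 :=
    continuous_fst.comp continuous_snd
  have hy : Continuous fun q : (ℤ → A) × ((ℤ → A) × (ℤ → A)) => q.2.2 :=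
    continuous_snd.comp continuous_snd
  have hlenc : ∀ k : ℤ, Continuous fun q : (ℤ → A) × ((ℤ → A) × (ℤ → A)) =>
      (ρ (q.2.1 k)).length := fun k =>
    continuous_list_length.comp (hρ.comp (continuous_x_coord k))
  refine IsClosed.inter ?_ (IsClosed.inter ?_ ?_)
  · refine isClosed_iInter fun j => isClosed_iInter fun m => isClosed_iInter fun _ =>
      isClosed_iInter fun _ => ?_
    exact (isClosed_lang ρ).preimage ((continuous_word j m).comp hx)
  · refine isClosed_iInter fun k => isClosed_iInter fun _ => isClosed_iInter fun _ =>
      isClosed_iInter fun i => ?_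
    refine IsClosed.union ?_ (IsClosed.inter ?_ ?_)
    · exact (isClosed_discrete {m : ℕ | m ≤ i}).preimage (hlenc k)
    · exact (isClosed_discrete {m : ℕ | i < m}).preimage (hlenc k)
    · refine isClosed_eq ?_ ?_
      · refine cont_eval hy ?_
        have hoseq : Continuous fun q : (ℤ → A) × ((ℤ → A) × (ℤ → A)) =>
            oseq ρ q.2.1 k := by
          unfold oseq
          refine Continuous.sub ?_ ?_ <;>
            exact continuous_finset_sum _ fun t _ =>
              continuous_of_discreteTopology.comp
                (continuous_list_length.comp (hρ.comp (continuous_x_coord _)))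
        exact hoseq.add continuous_const
      · exact (continuous_getD i a₀).comp (hρ.comp (continuous_x_coord k))
  · refine Set.Finite.isClosed_biUnion (Finset.range (M+1)).finite_toSet fun i _ => ?_
    refine IsClosed.inter ?_ ?_
    · exact (isClosed_discrete {m : ℕ | i < m}).preimage (hlenc 0)
    · refine isClosed_iInter fun j => isClosed_iInter fun _ => isClosed_iInter fun _ => ?_
      exact isClosed_eq ((continuous_apply _).comp hy) ((continuous_apply j).comp continuous_fst)

theorem Cset_antitone (M : ℕ) (a₀ : A) {n n' : ℕ} (h : n ≤ n') :
    Cset ρ M a₀ n' ⊆ Cset ρ M a₀ n := by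
  intro q hq
  rw [mem_Cset_iff] at hq ⊢
  obtain ⟨h1', h2', h3'⟩ := hq
  refine ⟨fun j m hj hjm => h1' j m (by push_cast; omega) (by push_cast; omega),
    fun k hk1 hk2 i => h2' k (by push_cast; omega) (by push_cast; omega) i, ?_⟩
  obtain ⟨i, hi1, hi2, hi3⟩ := h3'
  exact ⟨i, hi1, hi2, fun j hj1 hj2 => hi3 j (by push_cast; omega) (by push_cast; omega)⟩

def ExtSeq (a₀ : A) (N : ℕ) (u : List A) : ℤ → A := fun j => u.getD (j + (N:ℤ)).toNat a₀

theorem witness (h1 : ∀ a : A, 1 ≤ (ρ a).length) {M : ℕ}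
    (hM : ∀ a : A, (ρ a).length ≤ M) (a₀ : A) (n N : ℕ) (hN : N = M * (n + M + 2))
    (u' : List A) (hu' : u' ∈ rawS ρ) (hlen : u'.length = 2 * N + 1) :
    ∃ p : (ℤ → A) × (ℤ → A), ((ExtSeq a₀ N u', p) : (ℤ → A) × ((ℤ → A) × (ℤ → A))) ∈ Cset ρ M a₀ n := by
  classical
  have hMpos : 1 ≤ M := le_trans (h1 a₀) (hM a₀)
  have hNge : M * (n + M + 2) ≤ N := le_of_eq hN.symm
  have hNn : n + 1 ≤ N := by
    have h' : 1 * (n + M + 2) ≤ M * (n + M + 2) := Nat.mul_le_mul_right _ hMpos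
    omega
  obtain ⟨a, k, hinf⟩ := hu'
  rcases k with _ | k'
  · exfalso
    have : u'.length ≤ 1 := by
      have h := hinf.length_le
      simpa [substIter] using h
    omega
  set V : List A := substIter ρ k' a with hVdef
  have hV : substIter ρ (k' + 1) a = substWord ρ V := by
    rw [substIter, Function.iterate_succ_apply', ← substIter]
  rw [hV] at hinf
  obtain ⟨c, d, hcd⟩ := hinf
  set s := c.length with hs
  have htot : (substWord ρ V).length = s + (2 * N + 1) + d.length := by
    rw [← hcd]
    simp [hlen]
    omega
  set q₀ := s + N with hq₀
  have hq₀lt : q₀ < (substWord ρ V).length := by omega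
  obtain ⟨t₀, ht₀, hb1, hb2⟩ := exists_blockL ρ V hq₀lt
  have hOsucc := Ot_succ ρ V ht₀
  set i := q₀ - Ot ρ V t₀ with hi_def
  have hi : i < (ρ (V[t₀]'ht₀)).length := by omega
  have hiM : i < M + 1 := by
    have := hM (V[t₀]'ht₀)
    omega
  -- monotonicity helper
  have hOtmono : ∀ {s1 s2 : ℕ}, s1 ≤ s2 → s2 ≤ V.length → Ot ρ V s1 ≤ Ot ρ V s2 := by
    intro s1 s2 h12 h2
    have h := Ot_add_lower ρ V h1 (t := s1) (r := s2 - s1) (by omega)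
    have he : s1 + (s2 - s1) = s2 := by omega
    rw [he] at h
    omega
  -- claim 1 : n + M + 2 ≤ t₀
  have hclaim1 : n + M + 2 ≤ t₀ := by
    have hupper := Ot_add_upper ρ V hM (t := 0) (r := t₀ + 1) (by omega)
    simp only [Nat.zero_add, Ot_zero] at hupper
    have hq₀N : N ≤ q₀ := by omega
    have h6 : M * (n + M + 2) < (t₀ + 1) * M := by omega
    by_contra hc
    push_neg at hc
    have hle : (t₀ + 1) * M ≤ (n + M + 2) * M := Nat.mul_le_mul_right _ (by omega)
    have hcm : M * (n + M + 2) = (n + M + 2) * M := Nat.mul_comm _ _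
    omega
  -- claim 2 : t₀ + n + M + 3 ≤ V.length
  have hclaim2 : t₀ + n + M + 3 ≤ V.length := by
    set r := V.length - (t₀ + 1) with hr
    have hrr : t₀ + 1 + r = V.length := by omega
    have hupper := Ot_add_upper ρ V hM (t := t₀ + 1) (r := r) (by omega)
    rw [hrr, Ot_total] at hupper
    have hlM := hM (V[t₀]'ht₀)
    have hmul : (r + 1) * M = r * M + M := by ring
    have h2 : M * (n + M + 2) < (r + 1) * M := by omega
    by_contra hc
    push_neg at hc
    have hle : (r + 1) * M ≤ (n + M + 2) * M := Nat.mul_le_mul_right _ (by omega)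
    have hcm : M * (n + M + 2) = (n + M + 2) * M := Nat.mul_comm _ _
    omega
  -- the candidate sequences
  set x : ℤ → A := fun t => V.getD ((t₀ : ℤ) + t).toNat a₀ with hx
  set y : ℤ → A := decode ρ h1 a₀ x with hy
  have hfaith : ∀ tq : ℕ, x ((tq : ℤ) - (t₀ : ℤ)) = V.getD tq a₀ := by
    intro tq
    show V.getD ((t₀ : ℤ) + ((tq : ℤ) - (t₀ : ℤ))).toNat a₀ = V.getD tq a₀
    congr 1
    omega
  -- oseq matches Ot on the faithful range
  have ho : ∀ r : ℕ, t₀ + r ≤ V.length →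
      oseq ρ x (r : ℤ) = (Ot ρ V (t₀ + r) : ℤ) - (Ot ρ V t₀ : ℤ) := by
    intro r
    induction r with
    | zero => simp
    | succ m ih =>
      intro hrange
      have hmV : t₀ + m < V.length := by omega
      have hcast : ((m + 1 : ℕ) : ℤ) = (m : ℤ) + 1 := by push_cast; ring
      rw [hcast, oseq_succ]
      have hxm : x (m : ℤ) = V.getD (t₀ + m) a₀ := by
        have := hfaith (t₀ + m)
        have he : ((t₀ + m : ℕ) : ℤ) - (t₀ : ℤ) = (m : ℤ) := by push_cast; ring
        rwa [he] at this
      rw [hxm, List.getD_eq_getElem _ _ hmV]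
      have hot := Ot_succ ρ V hmV
      have hatom : Ot ρ V (t₀ + (m + 1)) = Ot ρ V (t₀ + m + 1) := rfl
      have := ih (by omega)
      omega
  have ho' : ∀ r : ℕ, r ≤ t₀ →
      oseq ρ x (-(r : ℤ)) = (Ot ρ V (t₀ - r) : ℤ) - (Ot ρ V t₀ : ℤ) := by
    intro r
    induction r with
    | zero => simp
    | succ m ih =>
      intro hrange
      have hmV : t₀ - (m + 1) < V.length := by omega
      have hstep := oseq_succ ρ x (-((m : ℤ) + 1))
      have he1 : -((m : ℤ) + 1) + 1 = -(m : ℤ) := by ring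
      rw [he1] at hstep
      have hxm : x (-((m : ℤ) + 1)) = V.getD (t₀ - (m + 1)) a₀ := by
        have := hfaith (t₀ - (m + 1))
        have he : ((t₀ - (m + 1) : ℕ) : ℤ) - (t₀ : ℤ) = -((m : ℤ) + 1) := by
          omega
        rwa [he] at this
      have hot := Ot_succ ρ V hmV
      have he2 : t₀ - (m + 1) + 1 = t₀ - m := by omega
      rw [he2] at hot
      have hihv := ih (by omega)
      have hcast : -((m + 1 : ℕ) : ℤ) = -((m : ℤ) + 1) := by push_cast; ring
      rw [hcast]
      rw [hxm, List.getD_eq_getElem _ _ hmV] at hstep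
      omega
  have hoz : ∀ z : ℤ, -(t₀ : ℤ) ≤ z → z ≤ (V.length : ℤ) - (t₀ : ℤ) →
      oseq ρ x z = (Ot ρ V ((t₀ : ℤ) + z).toNat : ℤ) - (Ot ρ V t₀ : ℤ) := by
    intro z hz1 hz2
    rcases le_or_gt 0 z with hz | hz
    · have hzz : z = ((z.toNat : ℕ) : ℤ) := by omega
      rw [hzz, ho z.toNat (by omega)]
      have : (t₀ : ℤ) + ((z.toNat : ℕ) : ℤ) = ((t₀ + z.toNat : ℕ) : ℤ) := by push_cast; ring
      rw [this, Int.toNat_natCast]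
    · have hzz : z = -(((-z).toNat : ℕ) : ℤ) := by omega
      rw [hzz, ho' (-z).toNat (by omega)]
      have : ((t₀ : ℤ) + -(((-z).toNat : ℕ) : ℤ)).toNat = t₀ - (-z).toNat := by omega
      rw [this]
  -- membership
  refine ⟨(x, y), ?_⟩
  rw [mem_Cset_iff]
  dsimp only
  refine ⟨?_, ?_, ?_⟩
  · -- A1 : legal words
    intro j m hj hjm
    apply rawS_subset_lang
    have hlb : 0 ≤ (t₀ : ℤ) + j := by omega
    have hub : ((t₀ : ℤ) + j).toNat + m ≤ V.length := by omega
    have hids : word x j m = (V.drop ((t₀ : ℤ) + j).toNat).take m := by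
      apply List.ext_getElem
      · rw [word_length, List.length_take, List.length_drop]
        omega
      · intro idx hidx1 hidx2
        simp only [word_eq_map, List.getElem_map, List.getElem_range]
        rw [List.getElem_take, List.getElem_drop]
        show V.getD ((t₀ : ℤ) + (j + (idx : ℤ))).toNat a₀ = _
        have hlt : ((t₀ : ℤ) + j).toNat + idx < V.length := by
          rw [word_length] at hidx1
          omega
        rw [List.getD_eq_getElem _ _ (by omega : ((t₀ : ℤ) + (j + (idx : ℤ))).toNat < V.length)]
        have he : ((t₀ : ℤ) + (j + (idx : ℤ))).toNat = ((t₀ : ℤ) + j).toNat + idx := by omega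
        simp only [he]
    rw [hids]
    refine ⟨a, k', ?_⟩
    refine ⟨V.take ((t₀ : ℤ) + j).toNat, (V.drop ((t₀ : ℤ) + j).toNat).drop m, ?_⟩
    rw [List.append_assoc, List.take_append_drop, List.take_append_drop]
  · -- A2 : substitution relation on window
    intro k hk1 hk2 iw
    by_cases hl : iw < (ρ (x k)).length
    · refine Or.inr ⟨hl, ?_⟩
      have := decode_spec ρ h1 a₀ x k iw hl
      rw [List.get_eq_getElem] at this
      rw [← hy] at this
      rw [this, List.getD_eq_getElem _ _ hl]
    · exact Or.inl (Nat.le_of_not_lt hl)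
  · -- A3 : matching the center window
    refine ⟨i, hiM, ?_, ?_⟩
    · have hx0 : x 0 = V.getD t₀ a₀ := by
        have := hfaith t₀
        simpa using this
      rw [hx0, List.getD_eq_getElem _ _ ht₀]
      exact hi
    · intro j hj1 hj2
      have hq'0 : 0 ≤ (q₀ : ℤ) + j := by omega
      set q' := ((q₀ : ℤ) + j).toNat with hq'
      have hq'lt : q' < (substWord ρ V).length := by omega
      obtain ⟨tq, htq, hg1, hg2⟩ := exists_blockL ρ V hq'lt
      have htq_ub : tq ≤ t₀ + n := by
        by_contra hc
        push_neg at hc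
        have h4 := Ot_add_lower ρ V h1 (t := t₀ + 1) (r := n) (by omega)
        have h5 : Ot ρ V (t₀ + 1 + n) ≤ Ot ρ V tq := hOtmono (by omega) (by omega)
        omega
      have htq_lb : t₀ ≤ tq + n := by
        by_contra hc
        push_neg at hc
        have h4 := Ot_add_lower ρ V h1 (t := t₀ - n) (r := n) (by omega)
        have he : t₀ - n + n = t₀ := by omega
        rw [he] at h4
        have h5 : Ot ρ V (tq + 1) ≤ Ot ρ V (t₀ - n) := hOtmono (by omega) (by omega)
        omega
      set z : ℤ := (tq : ℤ) - (t₀ : ℤ) with hz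
      have hoz1 : oseq ρ x z = (Ot ρ V tq : ℤ) - (Ot ρ V t₀ : ℤ) := by
        have := hoz z (by omega) (by omega)
        have he : ((t₀ : ℤ) + z).toNat = tq := by omega
        rwa [he] at this
      have hoz2 : oseq ρ x (z + 1) = (Ot ρ V (tq + 1) : ℤ) - (Ot ρ V t₀ : ℤ) := by
        have := hoz (z + 1) (by omega) (by omega)
        have he : ((t₀ : ℤ) + (z + 1)).toNat = tq + 1 := by omega
        rwa [he] at this
      have hblk : blockIdx ρ h1 x (j + (i : ℤ)) = z := by
        apply blockIdx_eq
        constructor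
        · rw [hoz1]; omega
        · rw [hoz2]; omega
      show decode ρ h1 a₀ x (j + (i : ℤ)) = ExtSeq a₀ N u' j
      rw [decode, hblk, hoz1]
      have hxz : x z = V.getD tq a₀ := hfaith tq
      rw [hxz, List.getD_eq_getElem _ _ htq]
      have hidx : (j + (i : ℤ) - ((Ot ρ V tq : ℤ) - (Ot ρ V t₀ : ℤ))).toNat = q' - Ot ρ V tq := by
        omega
      rw [hidx]
      have hsub := getD_substWord ρ V htq hg1 hg2 a₀
      rw [← hsub]
      -- now reduce to a getD fact about c ++ u' ++ d
      have hru : q' = s + (j + (N : ℤ)).toNat := by omega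
      have hrlt : (j + (N : ℤ)).toNat < u'.length := by omega
      rw [hru, ← hcd]
      show (c ++ u' ++ d).getD (s + (j + (N : ℤ)).toNat) a₀ = ExtSeq a₀ N u' j
      have hblen : s + (j + (N : ℤ)).toNat < (c ++ u' ++ d).length := by
        simp only [List.length_append]
        omega
      rw [List.getD_eq_getElem?_getD, List.append_assoc,
        List.getElem?_append_right (by omega : c.length ≤ s + (j + (N : ℤ)).toNat)]
      have he : s + (j + (N : ℤ)).toNat - c.length = (j + (N : ℤ)).toNat := by omega
      rw [he, List.getElem?_append_left hrlt]
      show (u'[(j + (N : ℤ)).toNat]?).getD a₀ = ExtSeq a₀ N u' j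
      rw [← List.getD_eq_getElem?_getD]
      rfl

end Main

/-- Every element of the subshift of a continuous substitution admits a supertiling
decomposition: for every `w ∈ X_ρ` there exist `x ∈ X_ρ` and `0 ≤ i ≤ |ρ(x₀)| - 1` with
`σ^i(ρ(x)) = w`. -/
theorem stmt10 {A : Type*} [TopologicalSpace A] [CompactSpace A] [T2Space A]
    (ρ : A → List A) (hρ : Continuous ρ) (h1 : ∀ a : A, 1 ≤ (ρ a).length) :
    ∀ w ∈ subshiftOf (lang ρ), ∃ x ∈ subshiftOf (lang ρ), ∃ y : ℤ → A,
      IsSubstOf ρ x y ∧ ∃ i : ℕ, i < (ρ (x 0)).length ∧ (fun j : ℤ => y (j + (i : ℤ))) = w := by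
  classical
  intro w hw
  set a₀ : A := w 0 with ha₀
  -- bound on the lengths of substituted letters
  have hcf : Continuous fun a : A => (ρ a).length := continuous_list_length.comp hρ
  have hfin : ((fun a : A => (ρ a).length) '' Set.univ).Finite :=
    (isCompact_univ.image hcf).finite_of_discrete
  obtain ⟨M, hMub⟩ := hfin.bddAbove
  have hMa : ∀ a : A, (ρ a).length ≤ M := fun a => hMub ⟨a, trivial, rfl⟩
  -- the nested closed sets
  set F : ℕ → Set ((ℤ → A) × (ℤ → A)) :=
    fun n => {p | ((w, p) : (ℤ → A) × ((ℤ → A) × (ℤ → A))) ∈ Cset ρ M a₀ n} with hF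
  have hFc : ∀ n, IsClosed (F n) := fun n =>
    (isClosed_Cset hρ M a₀ n).preimage (continuous_const.prodMk continuous_id)
  have hFanti : ∀ n, F (n + 1) ⊆ F n := by
    intro n p hp
    exact Cset_antitone M a₀ (Nat.le_succ n) hp
  have hFne : ∀ n, (F n).Nonempty := by
    intro n
    set N := M * (n + M + 2) with hNdef
    have hMpos : 1 ≤ M := le_trans (h1 a₀) (hMa a₀)
    have hnN : n + 1 ≤ N := by
      have h' : 1 * (n + M + 2) ≤ M * (n + M + 2) := Nat.mul_le_mul_right _ hMpos
      omega
    set u : List A := word w (-(N : ℤ)) (2 * N + 1) with hu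
    have hulen : u.length = 2 * N + 1 := word_length _ _ _
    have humem : u ∈ closure (rawS ρ) := hw (-(N : ℤ)) (2 * N + 1)
    have htuple := mem_closure_tuple humem
    set S1 : Set (Fin u.length → A) := {v | List.ofFn v ∈ rawS ρ} with hS1
    set EMap : (Fin u.length → A) → (ℤ → A) :=
      fun v => ExtSeq a₀ N (List.ofFn v) with hEMap
    have hcontE : Continuous EMap := by
      refine continuous_pi fun j => ?_
      exact (continuous_getD _ a₀).comp continuous_ofFn
    have hofnu : List.ofFn (fun i : Fin u.length => u.get i) = u := by
      simp [List.ofFn_getElem, List.get_eq_getElem]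
    have himg : ExtSeq a₀ N u ∈ closure (EMap '' S1) := by
      have h2 := Set.mem_image_of_mem EMap htuple
      have h3 := image_closure_subset_closure_image (s := S1) hcontE h2
      have h4 : EMap (fun i : Fin u.length => u.get i) = ExtSeq a₀ N u := by
        rw [hEMap]
        simp only [hofnu]
      rwa [h4] at h3
    set G : Set (ℤ → A) := Prod.fst '' Cset ρ M a₀ n with hG
    have hGclosed : IsClosed G :=
      isClosedMap_fst_of_compactSpace _ (isClosed_Cset hρ M a₀ n)
    have hsub : EMap '' S1 ⊆ G := by
      rintro z ⟨v, hv, rfl⟩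
      obtain ⟨p, hp⟩ := witness (ρ := ρ) h1 hMa a₀ n N rfl (List.ofFn v) hv
        (by rw [List.length_ofFn, hulen])
      exact ⟨(EMap v, p), hp, rfl⟩
    have hmemG : ExtSeq a₀ N u ∈ G := by
      have := closure_mono hsub himg
      rwa [hGclosed.closure_eq] at this
    obtain ⟨q, hq, hqfst⟩ := hmemG
    refine ⟨q.2, ?_⟩
    rw [hF]
    rw [Set.mem_setOf_eq, mem_Cset_iff]
    rw [mem_Cset_iff] at hq
    obtain ⟨hqa, hqb, hqc⟩ := hq
    refine ⟨hqa, hqb, ?_⟩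
    obtain ⟨i, hi1, hi2, hi3⟩ := hqc
    refine ⟨i, hi1, hi2, fun j hj1 hj2 => ?_⟩
    have h5 := hi3 j hj1 hj2
    rw [hqfst] at h5
    rw [h5]
    show ExtSeq a₀ N u j = w j
    show u.getD (j + (N : ℤ)).toNat a₀ = w j
    rw [hu]
    rw [word_getD w (-(N : ℤ)) (by omega : (j + (N : ℤ)).toNat < 2 * N + 1) a₀]
    congr 1
    omega
  -- pass to the limit
  obtain ⟨p, hp⟩ := IsCompact.nonempty_iInter_of_sequence_nonempty_isCompact_isClosed
    F hFanti hFne ((hFc 0).isCompact) hFc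
  have hmem : ∀ n : ℕ, ((w, p) : (ℤ → A) × ((ℤ → A) × (ℤ → A))) ∈ Cset ρ M a₀ n := by
    intro n
    have := Set.mem_iInter.mp hp n
    exact this
  set x : ℤ → A := p.1 with hxdef
  set y : ℤ → A := p.2 with hydef
  have hCs : ∀ n : ℕ,
      (∀ (j : ℤ) (m : ℕ), -(n:ℤ) ≤ j → j + (m:ℤ) ≤ (n:ℤ) → word x j m ∈ lang ρ) ∧
      (∀ k : ℤ, -(n:ℤ) ≤ k → k ≤ (n:ℤ) → ∀ i : ℕ,
        (ρ (x k)).length ≤ i ∨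
          (i < (ρ (x k)).length ∧ y (oseq ρ x k + (i:ℤ)) = (ρ (x k)).getD i a₀)) ∧
      (∃ i : ℕ, i < M + 1 ∧ i < (ρ (x 0)).length ∧
        ∀ j : ℤ, -(n:ℤ) ≤ j → j ≤ (n:ℤ) → y (j + (i:ℤ)) = w j) := by
    intro n
    have := hmem n
    rwa [mem_Cset_iff] at this
  have hxsub : x ∈ subshiftOf (lang ρ) := by
    intro j m
    exact (hCs (j.natAbs + m)).1 j m (by omega) (by omega)
  have hsubst : IsSubstOf ρ x y := by
    refine ⟨oseq ρ x, oseq_zero ρ x, fun k => ?_, fun k i hik => ?_⟩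
    · rw [oseq_succ]
    · have h2 := ((hCs k.natAbs).2.1 k (by omega) (by omega) i)
      rcases h2 with h2 | ⟨_, h2⟩
      · omega
      · rw [h2, List.getD_eq_getElem _ _ hik]
        rfl
  -- pigeonhole for the offset
  have hch : ∀ n : ℕ, ∃ i : ℕ, i < M + 1 ∧ i < (ρ (x 0)).length ∧
      ∀ j : ℤ, -(n:ℤ) ≤ j → j ≤ (n:ℤ) → y (j + (i:ℤ)) = w j := fun n => (hCs n).2.2
  choose g hg1 hg2 hg3 using hch
  have hpig : ∃ i : ℕ, {n : ℕ | g n = i}.Infinite := by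
    by_contra hc
    push_neg at hc
    have hcover : (Set.univ : Set ℕ) ⊆ ⋃ i ∈ Finset.range (M + 1), {n : ℕ | g n = i} := by
      intro n _
      simp only [Set.mem_iUnion, Finset.mem_range, Set.mem_setOf_eq]
      exact ⟨g n, hg1 n, rfl⟩
    have hfin2 : (⋃ i ∈ Finset.range (M + 1), {n : ℕ | g n = i}).Finite :=
      Set.Finite.biUnion (Finset.range (M + 1)).finite_toSet fun i _ => hc i
    exact Set.infinite_univ (Set.Finite.subset hfin2 hcover)
  obtain ⟨i, hinf⟩ := hpig
  obtain ⟨n₀, hn₀, -⟩ := hinf.exists_gt 0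
  have hilen : i < (ρ (x 0)).length := by
    have := hg2 n₀
    rwa [hn₀] at this
  refine ⟨x, hxsub, y, hsubst, i, hilen, ?_⟩
  funext j
  obtain ⟨n, hn_mem, hn_gt⟩ := hinf.exists_gt j.natAbs
  have := hg3 n j (by omega) (by omega)
  rwa [hn_mem] at this
end

section
/- A continuous substitution ρ on a compact Hausdorff alphabet is primitive if and only if for every finite open cover {U_1,...,U_ℓ} of A there exists p ≥ 0 such that for all a ∈ A and all 1 ≤ i ≤ ℓ, some letter of ρ^p(a) lies in U_i. -/
open Filter Topology

lemma substWord_iterate {A : Type*} (ρ : A → List A) (p : ℕ) (u : List A) :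
    (substWord ρ)^[p] u = u.flatMap (substIter ρ p) := by
  induction p generalizing u with
  | zero => exact (List.flatMap_singleton' u).symm
  | succ n ih =>
    rw [Function.iterate_succ_apply, ih, substWord, List.flatMap_assoc]
    congr 1
    funext a
    rw [substIter, Function.iterate_succ_apply, ← ih, substWord, List.flatMap_singleton]

lemma substIter_add {A : Type*} (ρ : A → List A) (p q : ℕ) (a : A) :
    substIter ρ (p + q) a = (substIter ρ q a).flatMap (substIter ρ p) := by
  rw [substIter, Function.iterate_add_apply, substWord_iterate, substIter]

lemma substIter_ne_nil {A : Type*} {ρ : A → List A} (hρ : ∀ a, ρ a ≠ []) (p : ℕ) (a : A) :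
    substIter ρ p a ≠ [] := by
  induction p with
  | zero => simp [substIter]
  | succ n ih =>
    rw [substIter, Function.iterate_succ_apply', ← substIter, substWord]
    simpa [List.flatMap_eq_nil_iff] using ⟨_, List.getLast_mem ih, hρ _⟩

/-- Since every supertile is non-empty, a level-`q` supertile contains a level-`p` one
for `p ≤ q`. -/
lemma exists_mem_substIter_of_le {A : Type*} {ρ : A → List A} (hρ : ∀ a, ρ a ≠ [])
    {U : Set A} {p q : ℕ} (hpq : p ≤ q) (hU : ∀ a, ∃ b ∈ substIter ρ p a, b ∈ U) (a : A) :
    ∃ b ∈ substIter ρ q a, b ∈ U := by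
  obtain ⟨c, hc⟩ := List.exists_mem_of_ne_nil _ (substIter_ne_nil hρ (q - p) a)
  obtain ⟨b, hb, hbU⟩ := hU c
  refine ⟨b, ?_, hbU⟩
  rw [← Nat.add_sub_cancel' hpq, substIter_add]
  exact List.mem_flatMap.2 ⟨c, hc, hb⟩

theorem stmt11_general {A : Type*} [TopologicalSpace A]
    (ρ : A → List A) (h1 : ∀ a : A, 1 ≤ (ρ a).length) :
    Primitive ρ ↔ ∀ (l : ℕ) (U : Fin l → Set A), (∀ i, IsOpen (U i)) →
      (∀ i, (U i).Nonempty) → (⋃ i, U i) = Set.univ →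
      ∃ p : ℕ, ∀ a : A, ∀ i : Fin l, ∃ b ∈ substIter ρ p a, b ∈ U i := by
  have hρ : ∀ a, ρ a ≠ [] := fun a => List.length_pos_iff.1 (h1 a)
  constructor
  · intro hprim l U hopen hne _
    choose p hp using fun i => hprim (U i) (hopen i) (hne i)
    exact ⟨Finset.univ.sup p, fun a i =>
      exists_mem_substIter_of_le hρ (Finset.le_sup (Finset.mem_univ i)) (hp i) a⟩
  · intro hcover U hU hUne
    -- `U` alone need not cover `A`; pad it with `univ`.
    obtain ⟨p, hp⟩ := hcover 2 ![U, Set.univ]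
      (fun i => by fin_cases i <;> simp [hU])
      (fun i => by fin_cases i <;> simp [hUne, hUne.mono (Set.subset_univ U)])
      (Set.eq_univ_of_subset (Set.subset_iUnion _ 1) (by simp))
    exact ⟨p, fun a => hp a 0⟩

/-- A continuous substitution is primitive iff for every finite open cover `{U_1,…,U_ℓ}` of
`A` (by non-empty open sets) there is `p ≥ 0` such that for every `a ∈ A` and every `i`,
some letter of `ρ^p(a)` lies in `U_i`. -/
theorem stmt11 {A : Type*} [TopologicalSpace A] [CompactSpace A] [T2Space A]
    (ρ : A → List A) (hρ : Continuous ρ) (h1 : ∀ a : A, 1 ≤ (ρ a).length) :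
    Primitive ρ ↔ ∀ (l : ℕ) (U : Fin l → Set A), (∀ i, IsOpen (U i)) →
      (∀ i, (U i).Nonempty) → (⋃ i, U i) = Set.univ →
      ∃ p : ℕ, ∀ a : A, ∀ i : Fin l, ∃ b ∈ substIter ρ p a, b ∈ U i :=
  stmt11_general ρ h1
end

section
/- If ρ is a primitive continuous substitution on a compact Hausdorff alphabet (and not the trivial substitution on one letter), then for every n ≥ 1 there exists p ≥ 0 such that |ρ^p(a)| ≥ n for all a ∈ A; in particular |ρ^i(a)| → ∞ for every letter a. -/
open Filter Topology

section Aux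

variable {A : Type*}

lemma substIter_succ' (ρ : A → List A) (n : ℕ) (a : A) :
    substIter ρ (n + 1) a = substWord ρ (substIter ρ n a) := by
  simp [substIter, Function.iterate_succ_apply']

lemma substIter_flatMap (ρ : A → List A) (q : ℕ) (u : List A) :
    (substWord ρ)^[q] u = u.flatMap (substIter ρ q) := by
  induction q with
  | zero =>
    have h0 : substIter ρ 0 = fun a => [a] := rfl
    rw [h0, List.flatMap_singleton']; simp
  | succ q ih =>
    rw [Function.iterate_succ_apply', ih, substWord, List.flatMap_assoc]
    congr 1
    funext a
    rw [substIter_succ' ρ q a, substWord]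

lemma len_flatMap_ge {c : ℕ} (f : A → List A) (hf : ∀ a, c ≤ (f a).length) (u : List A) :
    c * u.length ≤ (u.flatMap f).length := by
  rw [List.length_flatMap]
  calc c * u.length = (u.map fun _ => c).sum := by simp [Nat.mul_comm]
  _ ≤ _ := List.sum_le_sum (fun a _ => hf a)

lemma len_substWord_ge (ρ : A → List A) (h1 : ∀ a, 1 ≤ (ρ a).length) (u : List A) :
    u.length ≤ (substWord ρ u).length := by
  have := len_flatMap_ge ρ h1 u
  rw [substWord, List.length_flatMap]; simpa using this

lemma len_substIter_mono (ρ : A → List A) (h1 : ∀ a, 1 ≤ (ρ a).length) (a : A) :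
    Monotone fun i : ℕ => (substIter ρ i a).length := by
  apply monotone_nat_of_le_succ
  intro i
  rw [substIter_succ']
  exact len_substWord_ge ρ h1 _

end Aux

/-- If `ρ` is a primitive continuous substitution on a compact Hausdorff alphabet (and not
the trivial substitution `a ↦ a` on a one-letter alphabet), then for every `n` there is `p`
with `|ρ^p(a)| ≥ n` for all `a`; in particular `|ρ^i(a)| → ∞` for every letter `a`. -/
theorem stmt12 {A : Type*} [TopologicalSpace A] [CompactSpace A] [T2Space A]
    (ρ : A → List A) (hρ : Continuous ρ) (h1 : ∀ a : A, 1 ≤ (ρ a).length)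
    (hprim : Primitive ρ)
    (hnt : ¬ ∃ a : A, (∀ b : A, b = a) ∧ ρ a = [a]) :
    (∀ n : ℕ, ∃ p : ℕ, ∀ a : A, n ≤ (substIter ρ p a).length) ∧
    ∀ a : A, Tendsto (fun i : ℕ => (substIter ρ i a).length) atTop atTop := by
  rcases isEmpty_or_nonempty A with hA | hA
  · exact ⟨fun n => ⟨0, fun a => (hA.false a).elim⟩, fun a => (hA.false a).elim⟩
  -- Step 1: some letter has image of length ≥ 2
  have hex : ∃ a0 : A, 2 ≤ (ρ a0).length := by
    by_contra hno
    push_neg at hno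
    have hone : ∀ a, (ρ a).length = 1 := fun a =>
      le_antisymm (Nat.lt_succ_iff.mp (hno a)) (h1 a)
    -- then every supertile is a single letter
    have hsingle : ∀ (p : ℕ) (a : A), ∃ c : A, substIter ρ p a = [c] := by
      intro p a
      have hlen : ∀ u : List A, (substWord ρ u).length = u.length := by
        intro u
        rw [substWord, List.length_flatMap]
        calc (u.map (List.length ∘ ρ)).sum = (u.map fun _ => 1).sum := by
              congr 1; exact List.map_congr_left fun a _ => hone a
        _ = u.length := by simp
      have : (substIter ρ p a).length = 1 := by
        induction p with
        | zero => simp [substIter]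
        | succ p ih => rw [substIter_succ', hlen]; exact ih
      exact List.length_eq_one_iff.mp this
    -- A must be a subsingleton, else primitivity gives a contradiction
    have hsub : Subsingleton A := by
      by_contra hns
      rw [not_subsingleton_iff_nontrivial] at hns
      obtain ⟨x, y, hxy⟩ := hns.exists_pair_ne
      obtain ⟨U, V, hU, hV, hxU, hyV, hUV⟩ := t2_separation hxy
      obtain ⟨p, hp⟩ := hprim U hU ⟨x, hxU⟩
      obtain ⟨q, hq⟩ := hprim V hV ⟨y, hyV⟩
      obtain ⟨a⟩ := hA
      obtain ⟨c, hc⟩ := hsingle q a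
      obtain ⟨c', hc'⟩ := hsingle p a
      obtain ⟨d, hd⟩ := hsingle p c
      obtain ⟨e, he⟩ := hsingle q c'
      have h1' : substIter ρ (p + q) a = [d] := by
        have : substIter ρ (p + q) a = (substWord ρ)^[p] (substIter ρ q a) := by
          simp [substIter, Function.iterate_add_apply]
        rw [this, hc]
        exact hd
      have h2' : substIter ρ (p + q) a = [e] := by
        have : substIter ρ (p + q) a = (substWord ρ)^[q] (substIter ρ p a) := by
          rw [Nat.add_comm]
          simp [substIter, Function.iterate_add_apply]
        rw [this, hc']
        exact he
      have hde : d = e := by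
        rw [h1'] at h2'; exact List.singleton_inj.mp h2'
      obtain ⟨b, hb, hbU⟩ := hp c
      obtain ⟨b', hb', hbV⟩ := hq c'
      rw [hd, List.mem_singleton] at hb
      rw [he, List.mem_singleton] at hb'
      subst hb hb' hde
      exact (hUV.ne_of_mem hbU hbV) rfl
    -- then A is a one-point space with ρ a = [a], contradiction
    obtain ⟨a⟩ := hA
    apply hnt
    refine ⟨a, fun b => Subsingleton.elim b a, ?_⟩
    obtain ⟨c, hc⟩ := hsingle 1 a
    have : substIter ρ 1 a = ρ a := by
      simp [substIter, substWord]
    rw [this] at hc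
    rw [hc, Subsingleton.elim c a]
  -- Step 2: primitivity gives q with |ρ^q a| ≥ 2 for all a
  have hlen_cont : Continuous fun a => (ρ a).length :=
    (continuous_iff_continuousAt.2 List.continuousAt_length).comp hρ
  have hUopen : IsOpen {a : A | 2 ≤ (ρ a).length} :=
    hlen_cont.isOpen_preimage {n | 2 ≤ n} (isOpen_discrete _)
  obtain ⟨p, hp⟩ := hprim _ hUopen hex
  set q := p + 1 with hq
  have hq2 : ∀ a : A, 2 ≤ (substIter ρ q a).length := by
    intro a
    obtain ⟨b, hb, hb2⟩ := hp a
    rw [hq, substIter_succ', substWord]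
    obtain ⟨s, t, hst⟩ := List.append_of_mem hb
    rw [hst]
    simp only [List.flatMap_append, List.flatMap_cons, List.length_append]
    have hb2' : 2 ≤ (ρ b).length := hb2
    omega
  -- Step 3: exponential growth
  have hgrow : ∀ (k : ℕ) (a : A), 2 ^ k ≤ (substIter ρ (k * q) a).length := by
    intro k
    induction k with
    | zero => intro a; simpa [substIter] using le_refl 1
    | succ k ih =>
      intro a
      have hdec : substIter ρ ((k + 1) * q) a
          = (substIter ρ (k * q) a).flatMap (substIter ρ q) := by
        have : (k + 1) * q = q + k * q := by ring
        rw [this, substIter, Function.iterate_add_apply, ← substIter_flatMap]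
        rfl
      rw [hdec]
      calc (2 : ℕ) ^ (k + 1) = 2 * 2 ^ k := by ring
      _ ≤ 2 * (substIter ρ (k * q) a).length := by
          exact Nat.mul_le_mul_left 2 (ih a)
      _ ≤ _ := len_flatMap_ge (substIter ρ q) hq2 _
  have part1 : ∀ n : ℕ, ∃ p : ℕ, ∀ a : A, n ≤ (substIter ρ p a).length := by
    intro n
    refine ⟨n * q, fun a => ?_⟩
    exact le_trans (Nat.le_of_lt (Nat.lt_two_pow_self (n := n))) (hgrow n a)
  refine ⟨part1, fun a => ?_⟩
  apply tendsto_atTop_atTop_of_monotone (len_substIter_mono ρ h1 a)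
  intro b
  obtain ⟨p', hp'⟩ := part1 b
  exact ⟨p', hp' a⟩
end

section
/- If ρ is a primitive continuous substitution on a compact Hausdorff alphabet, then the substitution subshift X_ρ is minimal. -/
open Filter Topology

namespace Stmt13Aux

set_option linter.unusedSectionVars false

variable {A : Type*} [TopologicalSpace A]

/-- cylinder set in `List A` -/
def cyl (Vs : List (Set A)) : Set (List A) := {v | List.Forall₂ (· ∈ ·) v Vs}

lemma mem_cyl {v : List A} {Vs : List (Set A)} : v ∈ cyl Vs ↔ List.Forall₂ (· ∈ ·) v Vs :=
  Iff.rfl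

lemma traverse_id_eq_cyl (Vs : List (Set A)) : traverse (id : Set A → Set A) Vs = cyl Vs := by
  ext v
  rw [List.mem_traverse]
  rfl

lemma sequence_eq_cyl (Vs : List (Set A)) : (sequence Vs : Set (List A)) = cyl Vs :=
  traverse_id_eq_cyl Vs

lemma cyl_mem_nhds {u : List A} {Vs : List (Set A)}
    (h : List.Forall₂ (fun x V => V ∈ 𝓝 x) u Vs) : cyl Vs ∈ 𝓝 u := by
  rw [nhds_list, ← traverse_id_eq_cyl]
  exact Filter.mem_traverse u Vs h

lemma nhds_basis_cyl {u : List A} {s : Set (List A)} (h : s ∈ 𝓝 u) :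
    ∃ Vs : List (Set A), List.Forall₂ (fun x V => x ∈ V ∧ IsOpen V) u Vs ∧ cyl Vs ⊆ s := by
  rw [nhds_list] at h
  rcases (Filter.mem_traverse_iff _ _).1 h with ⟨us, hus, hsub⟩
  refine ⟨us.map interior, ?_, ?_⟩
  · rw [List.forall₂_map_right_iff]
    exact hus.imp fun x V hV => ⟨mem_interior_iff_mem_nhds.2 hV, isOpen_interior⟩
  · intro v hv
    apply hsub
    rw [sequence_eq_cyl]
    rw [mem_cyl, List.forall₂_map_right_iff] at hv
    exact hv.imp fun x V h => interior_subset h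

lemma mem_closure_list {S : Set (List A)} {u : List A} :
    u ∈ closure S ↔ ∀ Vs : List (Set A),
      List.Forall₂ (fun x V => x ∈ V ∧ IsOpen V) u Vs → ∃ v ∈ S, v ∈ cyl Vs := by
  constructor
  · intro h Vs hVs
    have hn : cyl Vs ∈ 𝓝 u := cyl_mem_nhds (hVs.imp fun x V hx => hx.2.mem_nhds hx.1)
    rcases mem_closure_iff_nhds.1 h _ hn with ⟨v, hv1, hv2⟩
    exact ⟨v, hv2, hv1⟩
  · intro h
    rw [mem_closure_iff_nhds]
    intro t ht
    rcases nhds_basis_cyl ht with ⟨Vs, hVs, hsub⟩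
    rcases h Vs hVs with ⟨v, hvS, hv⟩
    exact ⟨v, hsub hv, hvS⟩

lemma forall₂_nhds_replicate_univ (w : List A) :
    List.Forall₂ (fun x V => V ∈ 𝓝 x) w (List.replicate w.length (Set.univ : Set A)) := by
  rw [List.forall₂_iff_get]
  refine ⟨by simp, fun i h₁ h₂ => ?_⟩
  simp

lemma cyl_append_split {v : List A} {Vs1 Vs2 : List (Set A)}
    (h : v ∈ cyl (Vs1 ++ Vs2)) :
    ∃ v1 v2, v = v1 ++ v2 ∧ v1 ∈ cyl Vs1 ∧ v2 ∈ cyl Vs2 := by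
  refine ⟨v.take Vs1.length, v.drop Vs1.length, (List.take_append_drop _ v).symm, ?_, ?_⟩
  · exact List.forall₂_take_append v Vs1 Vs2 h
  · exact List.forall₂_drop_append v Vs1 Vs2 h

lemma cyl_append {v1 v2 : List A} {Vs1 Vs2 : List (Set A)} (h1 : v1 ∈ cyl Vs1)
    (h2 : v2 ∈ cyl Vs2) : v1 ++ v2 ∈ cyl (Vs1 ++ Vs2) :=
  List.rel_append h1 h2

lemma isOpen_length_eq (n : ℕ) : IsOpen {v : List A | v.length = n} := by
  rw [isOpen_iff_mem_nhds]
  intro v hv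
  have := cyl_mem_nhds (forall₂_nhds_replicate_univ v)
  refine Filter.mem_of_superset this ?_
  intro w hw
  have := (mem_cyl.1 hw).length_eq
  simp only [List.length_replicate] at this
  simp only [Set.mem_setOf_eq] at hv ⊢
  omega



set_option linter.unusedSectionVars false

variable {A : Type*}

lemma substWord_append (ρ : A → List A) (u v : List A) :
    substWord ρ (u ++ v) = substWord ρ u ++ substWord ρ v :=
  by unfold substWord; exact List.flatMap_append

lemma iter_substWord_append (ρ : A → List A) (k : ℕ) (u v : List A) :
    (substWord ρ)^[k] (u ++ v) = (substWord ρ)^[k] u ++ (substWord ρ)^[k] v := by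
  induction k generalizing u v with
  | zero => simp
  | succ k ih =>
    rw [Function.iterate_succ_apply, Function.iterate_succ_apply,
      Function.iterate_succ_apply, substWord_append, ih]

lemma iter_substWord_nil (ρ : A → List A) (k : ℕ) : (substWord ρ)^[k] ([] : List A) = [] := by
  induction k with
  | zero => rfl
  | succ k ih => rw [Function.iterate_succ_apply', ih]; rfl

lemma iter_substWord_eq_flatMap (ρ : A → List A) (k : ℕ) (u : List A) :
    (substWord ρ)^[k] u = u.flatMap (substIter ρ k) := by
  induction u with
  | nil => simp [iter_substWord_nil]
  | cons a u ih =>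
    have h : a :: u = [a] ++ u := rfl
    rw [h, iter_substWord_append, ih, List.flatMap_append]
    congr 1
    simp [substIter]

lemma substIter_add (ρ : A → List A) (k p : ℕ) (a : A) :
    substIter ρ (k + p) a = (substIter ρ p a).flatMap (substIter ρ k) := by
  rw [substIter, Function.iterate_add_apply, ← substIter, iter_substWord_eq_flatMap]

lemma substIter_succ (ρ : A → List A) (k : ℕ) (a : A) :
    substIter ρ (k + 1) a = (substIter ρ k a).flatMap ρ := by
  rw [substIter, Function.iterate_succ_apply', ← substIter]
  rfl

lemma infix_iter (ρ : A → List A) (k : ℕ) {u v : List A} (h : u <:+: v) :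
    (substWord ρ)^[k] u <:+: (substWord ρ)^[k] v := by
  obtain ⟨s, t, rfl⟩ := h
  exact ⟨(substWord ρ)^[k] s, (substWord ρ)^[k] t, by
    rw [← iter_substWord_append, ← iter_substWord_append]⟩

lemma substIter_infix_iter (ρ : A → List A) (k : ℕ) {u v : List A} (h : u <:+: v) :
    u.flatMap (substIter ρ k) <:+: v.flatMap (substIter ρ k) := by
  rw [← iter_substWord_eq_flatMap, ← iter_substWord_eq_flatMap]
  exact infix_iter ρ k h

lemma mem_flatMap_infix (g : A → List A) {b : A} {u : List A} (h : b ∈ u) :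
    g b <:+: u.flatMap g := by
  obtain ⟨s, t, rfl⟩ := List.append_of_mem h
  refine ⟨s.flatMap g, t.flatMap g, ?_⟩
  rw [List.flatMap_append, List.flatMap_cons]
  simp [List.append_assoc]

lemma le_length_flatMap {g : A → List A} {c : ℕ} (hg : ∀ b, c ≤ (g b).length) (u : List A) :
    c * u.length ≤ (u.flatMap g).length := by
  induction u with
  | nil => simp
  | cons a u ih =>
    rw [List.flatMap_cons, List.length_append, List.length_cons, Nat.mul_succ]
    have := hg a
    omega

lemma length_flatMap_le {g : A → List A} {M : ℕ} (hg : ∀ b, (g b).length ≤ M) (u : List A) :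
    (u.flatMap g).length ≤ M * u.length := by
  induction u with
  | nil => simp
  | cons a u ih =>
    rw [List.flatMap_cons, List.length_append, List.length_cons, Nat.mul_succ]
    have := hg a
    omega

lemma one_le_length_substIter {ρ : A → List A} (h1 : ∀ a, 1 ≤ (ρ a).length) (k : ℕ) (a : A) :
    1 ≤ (substIter ρ k a).length := by
  induction k with
  | zero => simp [substIter]
  | succ k ih =>
    rw [substIter_succ]
    calc 1 ≤ 1 * (substIter ρ k a).length := by omega
    _ ≤ _ := le_length_flatMap h1 _

lemma length_substIter_le {ρ : A → List A} {M : ℕ} (hM : ∀ a, (ρ a).length ≤ M)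
    (k : ℕ) (a : A) : (substIter ρ k a).length ≤ M ^ k := by
  induction k with
  | zero => simp [substIter]
  | succ k ih =>
    rw [substIter_succ]
    calc ((substIter ρ k a).flatMap ρ).length ≤ M * (substIter ρ k a).length :=
        length_flatMap_le hM _
    _ ≤ M * M ^ k := Nat.mul_le_mul_left M ih
    _ = M ^ (k + 1) := by ring

lemma two_le_length_of_two_mem {l : List A} {a b : A} (ha : a ∈ l) (hb : b ∈ l)
    (hab : a ≠ b) : 2 ≤ l.length := by
  match l with
  | [] => simp at ha
  | [x] =>
    simp only [List.mem_singleton] at ha hb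
    exact absurd (ha.trans hb.symm) hab
  | x :: y :: l => simp [List.length_cons]

lemma block_of_infix_flatMap {g : A → List A} {B : ℕ} (hB : 1 ≤ B)
    (hg1 : ∀ b, 1 ≤ (g b).length) (hgB : ∀ b, (g b).length ≤ B) :
    ∀ (v u : List A), u <:+: v.flatMap g → 2 * B ≤ u.length → ∃ c ∈ v, g c <:+: u := by
  intro v
  induction v with
  | nil =>
    intro u hu hlen
    rw [List.flatMap_nil, List.infix_nil] at hu
    subst hu
    simp at hlen
    omega
  | cons c v ih =>
    intro u hu hlen
    rw [List.flatMap_cons] at hu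
    obtain ⟨s, t, hst⟩ := hu
    rw [List.append_assoc] at hst
    rcases le_or_gt (g c).length s.length with hc | hc
    · -- u is inside v.flatMap g
      rcases List.append_eq_append_iff.1 hst with ⟨a', ha1, ha2⟩ | ⟨c', hs', hf⟩
      · have hlen' : a'.length = 0 := by
          have := congrArg List.length ha1
          simp at this
          omega
        rw [List.eq_nil_of_length_eq_zero hlen'] at ha2
        simp at ha2
        obtain ⟨d, hd, hdu⟩ := ih u ⟨[], t, by simp [ha2]⟩ hlen
        exact ⟨d, List.mem_cons_of_mem _ hd, hdu⟩
      · obtain ⟨d, hd, hdu⟩ := ih u ⟨c', t, by rw [hf, List.append_assoc]⟩ hlen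
        exact ⟨d, List.mem_cons_of_mem _ hd, hdu⟩
    · -- block boundary inside u
      rcases List.append_eq_append_iff.1 hst with ⟨a', ha1, ha2⟩ | ⟨x, hs', hf⟩
      swap
      · exfalso
        have := congrArg List.length hs'
        simp at this
        omega
      have ha1len : a'.length + s.length = (g c).length := by
        have := congrArg List.length ha1
        simp at this
        omega
      cases v with
      | nil =>
        exfalso
        simp only [List.flatMap_nil, List.append_nil] at ha2
        have := congrArg List.length ha2
        simp at this
        have := hgB c
        omega
      | cons e v' =>
        rw [List.flatMap_cons, ← List.append_assoc] at ha2
        have hlen2 : (a' ++ g e).length ≤ u.length := by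
          have h1' := hgB c
          have h2' := hgB e
          simp only [List.length_append]
          omega
        have hge : g e <:+: u := by
          rcases List.append_eq_append_iff.1 ha2 with ⟨x, hx1, hx2⟩ | ⟨x, hx1, hx2⟩
          · have hx0 : x.length = 0 := by
              have := congrArg List.length hx1
              simp only [List.length_append] at this hlen2
              omega
            rw [List.eq_nil_of_length_eq_zero hx0, List.append_nil] at hx1
            exact ⟨a', [], by simp [hx1]⟩
          · exact ⟨a', x, by rw [hx1, List.append_assoc]⟩
        exact ⟨e, by simp, hge⟩


section Part3

variable {A : Type*} [TopologicalSpace A]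

lemma flatMap_cyl {ρ : A → List A} (hρ : Continuous ρ) :
    ∀ (w : List A) (Vs : List (Set A)),
      List.Forall₂ (fun x V => V ∈ 𝓝 x) (w.flatMap ρ) Vs →
      ∃ Ws : List (Set A), List.Forall₂ (fun x W => W ∈ 𝓝 x) w Ws ∧
        ∀ w' ∈ cyl Ws, w'.flatMap ρ ∈ cyl Vs := by
  intro w
  induction w with
  | nil =>
    intro Vs h
    rw [List.flatMap_nil, List.forall₂_nil_left_iff] at h
    subst h
    refine ⟨[], List.Forall₂.nil, ?_⟩
    intro w' hw'
    rw [mem_cyl, List.forall₂_nil_right_iff] at hw'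
    subst hw'
    exact List.Forall₂.nil
  | cons a w ih =>
    intro Vs h
    rw [List.flatMap_cons] at h
    have h' := h.flip
    have h1 := List.forall₂_take_append Vs (ρ a) (w.flatMap ρ) h'
    have h2 := List.forall₂_drop_append Vs (ρ a) (w.flatMap ρ) h'
    obtain ⟨Ws, hWs, hprop⟩ := ih (Vs.drop (ρ a).length) h2.flip
    refine ⟨(ρ ⁻¹' cyl (Vs.take (ρ a).length)) :: Ws, ?_, ?_⟩
    · exact List.Forall₂.cons
        (hρ.continuousAt.preimage_mem_nhds (cyl_mem_nhds h1.flip)) hWs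
    · intro w' hw'
      rw [mem_cyl, List.forall₂_cons_right_iff] at hw'
      obtain ⟨b, w₂, hb, hw₂, rfl⟩ := hw'
      rw [List.flatMap_cons]
      have hres := cyl_append hb (hprop w₂ hw₂)
      rwa [List.take_append_drop] at hres

lemma substIter_cyl {ρ : A → List A} (hρ : Continuous ρ) (k : ℕ) :
    ∀ (a : A) (Vs : List (Set A)),
      List.Forall₂ (fun x V => V ∈ 𝓝 x) (substIter ρ k a) Vs →
      {b | substIter ρ k b ∈ cyl Vs} ∈ 𝓝 a := by
  induction k with
  | zero =>
    intro a Vs h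
    have h0 : substIter ρ 0 a = [a] := rfl
    rw [h0, List.forall₂_cons_left_iff] at h
    obtain ⟨V, Vs', hV, hVs', rfl⟩ := h
    rw [List.forall₂_nil_left_iff] at hVs'
    subst hVs'
    refine Filter.mem_of_superset hV ?_
    intro b hb
    exact List.Forall₂.cons hb List.Forall₂.nil
  | succ k ih =>
    intro a Vs h
    rw [substIter_succ] at h
    obtain ⟨Ws, hWs, hprop⟩ := flatMap_cyl hρ _ Vs h
    refine Filter.mem_of_superset (ih a Ws hWs) ?_
    intro b hb
    simp only [Set.mem_setOf_eq] at hb ⊢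
    rw [substIter_succ]
    exact hprop _ hb

lemma exists_bound [CompactSpace A] {ρ : A → List A} (hρ : Continuous ρ) :
    ∃ M : ℕ, 1 ≤ M ∧ ∀ a, (ρ a).length ≤ M := by
  have hopen : ∀ n : ℕ, IsOpen {a : A | (ρ a).length < n} := by
    intro n
    have he : {a : A | (ρ a).length < n} = ρ ⁻¹' (⋃ m < n, {v : List A | v.length = m}) := by
      ext a; simp
    rw [he]
    exact (isOpen_biUnion (fun m _ => isOpen_length_eq m)).preimage hρ
  have hcover : (Set.univ : Set A) ⊆ ⋃ n : ℕ, {a | (ρ a).length < n} :=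
    fun a _ => Set.mem_iUnion.2 ⟨(ρ a).length + 1, by simp⟩
  obtain ⟨t, ht⟩ := isCompact_univ.elim_finite_subcover _ hopen hcover
  refine ⟨t.sup id + 1, by omega, fun a => ?_⟩
  rcases Set.mem_iUnion₂.1 (ht (Set.mem_univ a)) with ⟨n, hn, ha⟩
  have hle := Finset.le_sup (f := id) hn
  simp only [Set.mem_setOf_eq] at ha
  simp only [id] at hle
  omega

lemma exists_two_le [T2Space A] [Nonempty A] {ρ : A → List A}
    (h1 : ∀ a, 1 ≤ (ρ a).length) (hprim : Primitive ρ)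
    (hnt : ¬ ∃ a : A, (∀ b : A, b = a) ∧ ρ a = [a]) :
    ∃ p : ℕ, ∀ a, 2 ≤ (substIter ρ p a).length := by
  by_cases hex : ∃ x y : A, x ≠ y
  · obtain ⟨x, y, hxy⟩ := hex
    obtain ⟨U, V, hU, hV, hxU, hyV, hUV⟩ := t2_separation hxy
    obtain ⟨p, hp⟩ := hprim U hU ⟨x, hxU⟩
    obtain ⟨q, hq⟩ := hprim V hV ⟨y, hyV⟩
    refine ⟨p + q, fun a => ?_⟩
    obtain ⟨c, hc⟩ := List.exists_mem_of_ne_nil _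
      (List.length_pos_iff.1 (one_le_length_substIter h1 q a))
    obtain ⟨b1, hb1mem, hb1U⟩ := hp c
    have h1mem : b1 ∈ substIter ρ (p + q) a := by
      rw [substIter_add]
      exact List.mem_flatMap.2 ⟨c, hc, hb1mem⟩
    obtain ⟨d, hd⟩ := List.exists_mem_of_ne_nil _
      (List.length_pos_iff.1 (one_le_length_substIter h1 p a))
    obtain ⟨b2, hb2mem, hb2V⟩ := hq d
    have h2mem : b2 ∈ substIter ρ (p + q) a := by
      rw [show p + q = q + p from by ring, substIter_add]
      exact List.mem_flatMap.2 ⟨d, hd, hb2mem⟩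
    have hne : b1 ≠ b2 := fun h => Set.disjoint_left.1 hUV hb1U (h ▸ hb2V)
    exact two_le_length_of_two_mem h1mem h2mem hne
  · push_neg at hex
    have a0 : A := Classical.arbitrary A
    have hall : ∀ b : A, b = a0 := fun b => hex b a0
    have hne : ρ a0 ≠ [a0] := fun h => hnt ⟨a0, hall, h⟩
    have h2 : 2 ≤ (ρ a0).length := by
      rcases Nat.lt_or_ge (ρ a0).length 2 with h | h
      · exfalso
        have hl1 : (ρ a0).length = 1 := by have := h1 a0; omega
        obtain ⟨c, hc⟩ := List.length_eq_one_iff.1 hl1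
        exact hne (by rw [hc, hall c])
      · exact h
    refine ⟨1, fun a => ?_⟩
    have he : substIter ρ 1 a = ρ a := by
      rw [show (1 : ℕ) = 0 + 1 from rfl, substIter_succ]
      simp [substIter]
    rw [he, hall a]
    exact h2

lemma two_pow_le_length {ρ : A → List A} {p : ℕ}
    (h1 : ∀ a, 1 ≤ (ρ a).length) (hp : ∀ a, 2 ≤ (substIter ρ p a).length) :
    ∀ (m : ℕ) (a : A), 2 ^ m ≤ (substIter ρ (m * p) a).length := by
  intro m
  induction m with
  | zero => intro a; simpa using one_le_length_substIter h1 0 a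
  | succ m ih =>
    intro a
    rw [show (m + 1) * p = m * p + p from by ring, substIter_add]
    calc (2:ℕ) ^ (m + 1) = 2 ^ m * 2 := by ring
      _ ≤ 2 ^ m * (substIter ρ p a).length := Nat.mul_le_mul_left _ (hp a)
      _ ≤ _ := le_length_flatMap (fun b => ih b) _

end Part3

section Words

variable {A : Type*}

lemma word_eq (w : ℤ → A) (j : ℤ) (n : ℕ) :
    word w j n = (List.range n).map (fun i : ℕ => w (j + (i : ℤ))) := by
  simp only [word, List.bind_eq_flatMap, List.pure_def]
  rw [show ((List.range n).flatMap fun a : ℕ => [(a : ℤ)])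
      = (List.range n).map (fun a : ℕ => (a : ℤ)) by
    induction (List.range n) with
    | nil => rfl
    | cons x l ih => simp [ih]]
  rw [List.map_map]
  rfl

lemma word_length (w : ℤ → A) (j : ℤ) (n : ℕ) : (word w j n).length = n := by
  rw [word_eq]; simp

lemma word_get (w : ℤ → A) (j : ℤ) (n : ℕ) (i : ℕ) (h : i < (word w j n).length) :
    (word w j n).get ⟨i, h⟩ = w (j + i) := by
  simp only [word_eq, List.get_eq_getElem, List.getElem_map, List.getElem_range]

lemma word_append (w : ℤ → A) (j : ℤ) (m n : ℕ) :
    word w j (m + n) = word w j m ++ word w (j + m) n := by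
  rw [word_eq, List.range_add, List.map_append, List.map_map, word_eq, word_eq]
  congr 1
  apply List.map_congr_left
  intro i _
  simp only [Function.comp_apply]
  congr 1
  push_cast
  ring

lemma word_succ (w : ℤ → A) (j : ℤ) (n : ℕ) : word w j (n + 1) = w j :: word w (j + 1) n := by
  rw [show n + 1 = 1 + n from by ring, word_append]
  have h1 : word w j 1 = [w j] := by
    rw [word_eq, show List.range 1 = [0] from rfl, List.map_singleton]
    norm_num
  rw [h1, List.singleton_append]
  norm_num

lemma continuous_word [TopologicalSpace A] :
    ∀ (n : ℕ) (j : ℤ), Continuous fun w : ℤ → A => word w j n := by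
  intro n
  induction n with
  | zero =>
    intro j
    have he : (fun w : ℤ → A => word w j 0) = fun _ => [] := by
      funext w; rw [word_eq]; simp
    rw [he]; exact continuous_const
  | succ n ih =>
    intro j
    have he : (fun w : ℤ → A => word w j (n+1)) = fun w => w j :: word w (j+1) n :=
      funext fun w => word_succ w j n
    rw [he]
    exact List.continuous_cons.comp ((continuous_apply j).prodMk (ih (j+1)))

lemma word_shift (w : ℤ → A) (j : ℤ) (n : ℕ) : word (shift w) j n = word w (j + 1) n := by
  rw [word_eq, word_eq]
  congr 1
  funext i
  simp only [shift]
  congr 1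
  ring

lemma word_infix (w : ℤ → A) {j j0 : ℤ} {n n0 : ℕ} (hle : j0 ≤ j) (h2 : j + n ≤ j0 + n0) :
    word w j n <:+: word w j0 n0 := by
  set m := (j - j0).toNat with hm
  have hmn : m + n ≤ n0 := by omega
  refine ⟨word w j0 m, word w (j0 + ((m + n : ℕ) : ℤ)) (n0 - m - n), ?_⟩
  rw [show j = j0 + (m : ℤ) from by omega, ← word_append, ← word_append,
    show m + n + (n0 - m - n) = n0 from by omega]

end Words

section Key

variable {A : Type*} [TopologicalSpace A] [CompactSpace A] [T2Space A] [Nonempty A]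
variable {ρ : A → List A}

lemma exists_closed_cyl {u : List A} {Vs : List (Set A)}
    (h : List.Forall₂ (fun x V => x ∈ V ∧ IsOpen V) u Vs) :
    ∃ Cs : List (Set A), List.Forall₂ (fun x C => C ∈ 𝓝 x) u Cs ∧
      List.Forall₂ (fun C V => IsClosed C ∧ C ⊆ V) Cs Vs := by
  induction h with
  | nil => exact ⟨[], List.Forall₂.nil, List.Forall₂.nil⟩
  | @cons x V u' Vs' hxV hrest ih =>
    obtain ⟨Cs, ha, hb⟩ := ih
    obtain ⟨Ct, hCt, hCtc, hCtV⟩ := exists_mem_nhds_isClosed_subset (hxV.2.mem_nhds hxV.1)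
    exact ⟨Ct :: Cs, List.Forall₂.cons hCt ha, List.Forall₂.cons ⟨hCtc, hCtV⟩ hb⟩

lemma key (hρ : Continuous ρ) (h1 : ∀ a : A, 1 ≤ (ρ a).length) (hprim : Primitive ρ)
    (hnt : ¬ ∃ a : A, (∀ b : A, b = a) ∧ ρ a = [a])
    {y : ℤ → A} (hy : y ∈ subshiftOf (lang ρ))
    {u : List A} (hu : ∃ (a : A) (k : ℕ), u <:+: substIter ρ k a)
    {Vs : List (Set A)} (hVs : List.Forall₂ (fun x V => x ∈ V ∧ IsOpen V) u Vs) :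
    ∃ j : ℤ, word y j u.length ∈ cyl Vs := by
  obtain ⟨a, k, hinf⟩ := hu
  obtain ⟨Cs, hCs1, hCs2⟩ := exists_closed_cyl hVs
  set l := u.length with hl
  have hlenC : Cs.length = l := hCs1.length_eq.symm
  have hlenV : Vs.length = l := hVs.length_eq.symm
  by_cases hl0 : l = 0
  · refine ⟨0, ?_⟩
    have hVs0 : Vs = [] := List.eq_nil_of_length_eq_zero (by omega)
    have hw0 : word y 0 l = [] := by
      rw [hl0, word_eq]; rfl
    rw [hw0, hVs0]
    exact List.Forall₂.nil
  have hl1 : 1 ≤ l := by omega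
  set C : ℕ → Set A := fun i => if h : i < Cs.length then Cs.get ⟨i, h⟩ else Set.univ with hC
  have hCclosed : ∀ i, IsClosed (C i) := by
    intro i
    simp only [hC]
    by_cases h : i < Cs.length
    · rw [dif_pos h]
      have := (List.forall₂_iff_get.1 hCs2).2 i h (by omega)
      exact this.1
    · rw [dif_neg h]
      exact isClosed_univ
  obtain ⟨s0, t0, hst0⟩ := hinf
  set Ds : List (Set A) :=
    List.replicate s0.length Set.univ ++ Cs ++ List.replicate t0.length Set.univ with hDs
  have hDnhds : List.Forall₂ (fun x D => D ∈ 𝓝 x) (substIter ρ k a) Ds := by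
    rw [← hst0, hDs]
    exact List.rel_append
      (List.rel_append (forall₂_nhds_replicate_univ s0) hCs1)
      (forall₂_nhds_replicate_univ t0)
  have hW : {b | substIter ρ k b ∈ cyl Ds} ∈ 𝓝 a := substIter_cyl hρ k a Ds hDnhds
  obtain ⟨p, hp⟩ := hprim (interior {b | substIter ρ k b ∈ cyl Ds}) isOpen_interior
    ⟨a, mem_interior_iff_mem_nhds.2 hW⟩
  obtain ⟨M, hM1, hM⟩ := exists_bound hρ
  set B := M ^ (k + p) with hB
  have hB1 : 1 ≤ B := Nat.one_le_pow _ _ (by omega)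
  set N := 2 * B with hN
  -- every generated word of length N contains a translate of the pattern
  have hblock : ∀ v : List A, (∃ (c : A) (K : ℕ), v <:+: substIter ρ K c) → v.length = N →
      ∃ js : ℕ, js + l ≤ N ∧ ∀ i, i < l → ∀ h2 : js + i < v.length,
        v.get ⟨js + i, h2⟩ ∈ C i := by
    rintro v ⟨c, K, hvK⟩ hvN
    have hKge : k + p ≤ K := by
      by_contra hK
      push_neg at hK
      have hle1 : v.length ≤ (substIter ρ K c).length := hvK.length_le
      have hle2 : (substIter ρ K c).length ≤ M ^ K := length_substIter_le hM K c
      have hle3 : M ^ K ≤ M ^ (k + p) := Nat.pow_le_pow_right (by omega) (by omega)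
      omega
    have hdec : substIter ρ K c = (substIter ρ (K - (k + p)) c).flatMap (substIter ρ (k + p)) := by
      rw [← substIter_add]
      congr 1
      omega
    obtain ⟨d, _, hdv⟩ := block_of_infix_flatMap hB1
      (fun b => one_le_length_substIter h1 (k + p) b)
      (fun b => length_substIter_le hM (k + p) b) _ v (hdec ▸ hvK) (by omega)
    obtain ⟨b, hbmem, hbW⟩ := hp d
    have hbW'' : b ∈ {b | substIter ρ k b ∈ cyl Ds} := interior_subset hbW
    have hbW' : substIter ρ k b ∈ cyl Ds := hbW''
    have hsub : substIter ρ k b <:+: substIter ρ (k + p) d := by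
      rw [substIter_add]
      exact mem_flatMap_infix _ hbmem
    have hsubv : substIter ρ k b <:+: v := hsub.trans hdv
    rw [hDs] at hbW'
    obtain ⟨v1, v2, hv12, hv1mem, hv2mem⟩ := cyl_append_split hbW'
    obtain ⟨v11, v12, hv112, hv11mem, hv12mem⟩ := cyl_append_split hv1mem
    have hlen12 : v12.length = l := by
      rw [(mem_cyl.1 hv12mem).length_eq, hlenC]
    have hinf12 : v12 <:+: v := by
      refine List.IsInfix.trans ⟨v11, v2, ?_⟩ hsubv
      rw [hv12, hv112]
    obtain ⟨s, t, hstv⟩ := hinf12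
    refine ⟨s.length, ?_, ?_⟩
    · have := congrArg List.length hstv
      simp only [List.length_append] at this
      omega
    · intro i hil h2
      have hiv : i < v12.length := by omega
      have hgeteq : v.get ⟨s.length + i, h2⟩ = v12.get ⟨i, hiv⟩ := by
        show v[s.length + i]'h2 = v12[i]'hiv
        rw [List.getElem_of_eq hstv.symm]
        rw [List.getElem_append_left (by rw [List.length_append]; omega)]
        rw [List.getElem_append_right (by omega)]
        simp only [Nat.add_sub_cancel_left]
      rw [hgeteq]
      simp only [hC]
      rw [dif_pos (by omega)]
      exact (List.forall₂_iff_get.1 (mem_cyl.1 hv12mem)).2 i (by omega) (by omega)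
  -- main claim about y
  have hyN := hy 0 N
  have hclaim : ∃ j : ℕ, j + l ≤ N ∧ ∀ i, i < l → y ((j : ℤ) + (i : ℤ)) ∈ C i := by
    by_contra hbad
    push_neg at hbad
    have hF : ∀ j : ℕ, ∃ i : ℕ, j + l ≤ N → (i < l ∧ y ((j : ℤ) + (i : ℤ)) ∉ C i) := by
      intro j
      by_cases hj : j + l ≤ N
      · obtain ⟨i, hi1, hi2⟩ := hbad j hj
        exact ⟨i, fun _ => ⟨hi1, hi2⟩⟩
      · exact ⟨0, fun h => absurd h hj⟩
    choose F hFspec using hF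
    set O : ℕ → Set A := fun m =>
      ⋂ j ∈ Finset.range N, {x : A | (j + l ≤ N ∧ j + F j = m) → x ∉ C (F j)} with hO
    have hOopen : ∀ m, IsOpen (O m) := by
      intro m
      refine isOpen_biInter_finset fun j _ => ?_
      by_cases hcond : j + l ≤ N ∧ j + F j = m
      · have he : {x : A | (j + l ≤ N ∧ j + F j = m) → x ∉ C (F j)} = (C (F j))ᶜ := by
          ext x; simp [hcond]
        rw [he]
        exact (hCclosed _).isOpen_compl
      · have he : {x : A | (j + l ≤ N ∧ j + F j = m) → x ∉ C (F j)} = Set.univ := by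
          ext x; simp [hcond]
        rw [he]
        exact isOpen_univ
    have hOy : ∀ m, y ((m : ℕ) : ℤ) ∈ O m := by
      intro m
      rw [hO]
      refine Set.mem_iInter₂.2 fun j _ => ?_
      simp only [Set.mem_setOf_eq]
      rintro ⟨hjl, hjm⟩
      have h2 := (hFspec j hjl).2
      have hcast : ((m : ℕ) : ℤ) = (j : ℤ) + (F j : ℤ) := by
        rw [← hjm]; push_cast; ring
      rw [hcast]
      exact h2
    set Os : List (Set A) := (List.range N).map O with hOs
    have hOslen : Os.length = N := by rw [hOs, List.length_map, List.length_range]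
    have hforall : List.Forall₂ (fun x V => x ∈ V ∧ IsOpen V) (word y 0 N) Os := by
      rw [List.forall₂_iff_get]
      refine ⟨by rw [word_length, hOslen], fun i hi1 hi2 => ?_⟩
      rw [word_get]
      have hiN : i < N := by rwa [word_length] at hi1
      have hOget : Os.get ⟨i, hi2⟩ = O i := by
        show ((List.range N).map O).get ⟨i, hi2⟩ = O i
        rw [List.get_eq_getElem, List.getElem_map, List.getElem_range]
      rw [hOget, show (0 : ℤ) + (i : ℤ) = (i : ℤ) from by ring]
      exact ⟨hOy i, hOopen i⟩
    obtain ⟨v, hvG, hvOs⟩ := mem_closure_list.1 hyN Os hforall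
    have hvN : v.length = N := by
      have := (mem_cyl.1 hvOs).length_eq
      rwa [hOslen] at this
    obtain ⟨js, hjsl, hblockv⟩ := hblock v hvG hvN
    set i0 := F js with hi0def
    have hspec := hFspec js hjsl
    have hi0l : i0 < l := hspec.1
    have hmem1 : v.get ⟨js + i0, by omega⟩ ∈ C i0 := hblockv i0 hi0l (by omega)
    have hmem2 : v.get ⟨js + i0, by omega⟩ ∈ O (js + i0) := by
      have hg := (List.forall₂_iff_get.1 (mem_cyl.1 hvOs)).2 (js + i0) (by omega) (by omega)
      have hOget : Os.get ⟨js + i0, by omega⟩ = O (js + i0) := by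
        show ((List.range N).map O).get
          ⟨js + i0, by simp only [List.length_map, List.length_range]; omega⟩ = O (js + i0)
        rw [List.get_eq_getElem, List.getElem_map, List.getElem_range]
      rwa [hOget] at hg
    have hfin := Set.mem_iInter₂.1 hmem2 js (Finset.mem_range.2 (by omega))
    exact hfin ⟨hjsl, rfl⟩ hmem1
  obtain ⟨j, _, hjC⟩ := hclaim
  refine ⟨(j : ℤ), ?_⟩
  rw [mem_cyl, List.forall₂_iff_get]
  refine ⟨by rw [word_length, hlenV], fun i hi1 hi2 => ?_⟩
  rw [word_get]
  have hil : i < l := by rwa [word_length] at hi1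
  have hCV := (List.forall₂_iff_get.1 hCs2).2 i (by omega) (by omega)
  refine hCV.2 ?_
  have hjCi := hjC i hil
  simp only [hC] at hjCi
  rwa [dif_pos (by omega)] at hjCi

end Key

section Main

variable {A : Type*} [TopologicalSpace A]

lemma forall₂_univ_pred (P : A → Set A → Prop) (hP : ∀ x, P x Set.univ) (w : List A) :
    List.Forall₂ P w (List.replicate w.length Set.univ) := by
  rw [List.forall₂_iff_get]
  refine ⟨by simp, fun i h₁ h₂ => ?_⟩
  simp only [List.get_eq_getElem, List.getElem_replicate]
  exact hP _

lemma lang_infix_closed {ρ : A → List A} {u' u : List A} (h : u' <:+: u) (hu : u ∈ lang ρ) :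
    u' ∈ lang ρ := by
  unfold lang at hu ⊢
  rw [mem_closure_list] at hu ⊢
  intro Vs' hVs'
  obtain ⟨s, t, hst⟩ := h
  have hVs : List.Forall₂ (fun x V => x ∈ V ∧ IsOpen V) u
      (List.replicate s.length Set.univ ++ Vs' ++ List.replicate t.length Set.univ) := by
    rw [← hst]
    exact List.rel_append
      (List.rel_append (forall₂_univ_pred _ (fun x => ⟨trivial, isOpen_univ⟩) s) hVs')
      (forall₂_univ_pred _ (fun x => ⟨trivial, isOpen_univ⟩) t)
  obtain ⟨v, hvG, hvVs⟩ := hu _ hVs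
  obtain ⟨v1, v2, hv12, hv1, hv2⟩ := cyl_append_split hvVs
  obtain ⟨v11, v12, hv112, _, hv12'⟩ := cyl_append_split hv1
  obtain ⟨a, k, hvk⟩ := hvG
  refine ⟨v12, ⟨a, k, List.IsInfix.trans ⟨v11, v2, ?_⟩ hvk⟩, hv12'⟩
  rw [hv12, hv112]

lemma isClosed_subshift (ρ : A → List A) : IsClosed (subshiftOf (lang ρ)) := by
  have he : subshiftOf (lang ρ) = ⋂ (j : ℤ) (n : ℕ), (fun w => word w j n) ⁻¹' (lang ρ) := by
    ext w
    simp only [subshiftOf, Set.mem_setOf_eq, Set.mem_iInter, Set.mem_preimage]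
  rw [he]
  exact isClosed_iInter fun j => isClosed_iInter fun n =>
    IsClosed.preimage (continuous_word n j) (by unfold lang; exact isClosed_closure)

lemma shift_image (ρ : A → List A) :
    shift '' subshiftOf (lang ρ) = subshiftOf (lang ρ) := by
  apply Set.eq_of_subset_of_subset
  · rintro _ ⟨w, hw, rfl⟩ j n
    rw [word_shift]
    exact hw (j + 1) n
  · intro w hw
    refine ⟨fun i => w (i - 1), fun j n => ?_, ?_⟩
    · have he : word (fun i => w (i - 1)) j n = word w (j - 1) n := by
        rw [word_eq, word_eq]
        apply List.map_congr_left
        intro i _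
        congr 1
        ring
      rw [he]
      exact hw (j - 1) n
    · funext i
      show w (i + 1 - 1) = w i
      congr 1
      ring

lemma orbit_subset_invariant {Y : Set (ℤ → A)} (hYinv : shift '' Y = Y) {y : ℤ → A}
    (hy : y ∈ Y) : orbit y ⊆ Y := by
  rintro _ ⟨kk, rfl⟩
  induction kk using Int.induction_on with
  | zero =>
    have he : (fun i : ℤ => y (i + 0)) = y := by funext i; rw [add_zero]
    rw [he]; exact hy
  | succ k ih =>
    have he : (fun i : ℤ => y (i + (k + 1))) = shift (fun i => y (i + k)) := by
      funext i
      show y (i + (k + 1)) = y (i + 1 + k)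
      congr 1
      ring
    rw [he, ← hYinv]
    exact ⟨_, ih, rfl⟩
  | pred k ih =>
    have h2 : (fun i : ℤ => y (i + -(k : ℤ))) ∈ shift '' Y := by rw [hYinv]; exact ih
    obtain ⟨z, hz, hze⟩ := h2
    have he : z = fun i : ℤ => y (i + (-(k : ℤ) - 1)) := by
      funext i
      have h3 := congrFun hze (i - 1)
      show z i = y (i + (-(k:ℤ) - 1))
      have h4 : shift z (i - 1) = z i := by
        show z (i - 1 + 1) = z i
        congr 1
        ring
      rw [h4] at h3
      rw [h3]
      congr 1
      ring
    rw [← he]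
    exact hz

lemma nonempty_subshift [CompactSpace A] [T2Space A] [Nonempty A] {ρ : A → List A}
    (hρ : Continuous ρ) (h1 : ∀ a : A, 1 ≤ (ρ a).length) (hprim : Primitive ρ)
    (hnt : ¬ ∃ a : A, (∀ b : A, b = a) ∧ ρ a = [a]) :
    (subshiftOf (lang ρ)).Nonempty := by
  obtain ⟨p, hp⟩ := exists_two_le h1 hprim hnt
  set Z : ℕ → Set (ℤ → A) := fun N => {w | word w (-(N : ℤ)) (2 * N + 1) ∈ lang ρ} with hZ
  have hZclosed : ∀ N, IsClosed (Z N) := fun N =>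
    IsClosed.preimage (continuous_word _ _) (by unfold lang; exact isClosed_closure)
  have hZanti : ∀ N, Z (N + 1) ⊆ Z N := by
    intro N w hw
    refine lang_infix_closed (word_infix w ?_ ?_) hw
    · push_cast; omega
    · push_cast; omega
  have hZne : ∀ N, (Z N).Nonempty := by
    intro N
    have a0 : A := Classical.arbitrary A
    obtain ⟨m, hm2⟩ : ∃ m, 2 * N + 1 ≤ 2 ^ m := ⟨2 * N + 1, le_of_lt Nat.lt_two_pow_self⟩
    have hlen : 2 * N + 1 ≤ (substIter ρ (m * p) a0).length :=
      le_trans hm2 (two_pow_le_length h1 hp m a0)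
    set u := (substIter ρ (m * p) a0).take (2 * N + 1) with hu
    have hulen : u.length = 2 * N + 1 := by rw [hu, List.length_take]; omega
    have huG : ∃ a k, u <:+: substIter ρ k a :=
      ⟨a0, m * p, (List.take_prefix _ _).isInfix⟩
    refine ⟨fun i => u.getD (i + N).toNat a0, ?_⟩
    show word (fun i => u.getD (i + N).toNat a0) (-(N : ℤ)) (2 * N + 1) ∈ lang ρ
    have hword : word (fun i => u.getD (i + N).toNat a0) (-(N : ℤ)) (2 * N + 1) = u := by
      apply List.ext_get (by rw [word_length, hulen])
      intro i h1' h2'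
      rw [word_get]
      show u.getD ((-(N:ℤ) + i) + N).toNat a0 = u.get ⟨i, h2'⟩
      have hi : ((-(N:ℤ) + i) + N).toNat = i := by omega
      rw [hi, List.getD_eq_getElem u a0 h2', List.get_eq_getElem]
    rw [hword]
    unfold lang
    exact subset_closure huG
  have hmain : (⋂ N, Z N).Nonempty :=
    IsCompact.nonempty_iInter_of_sequence_nonempty_isCompact_isClosed Z hZanti hZne
      ((hZclosed 0).isCompact) hZclosed
  obtain ⟨w, hw⟩ := hmain
  refine ⟨w, fun j n => ?_⟩
  obtain ⟨N, hN1, hN2⟩ : ∃ N : ℕ, -(N : ℤ) ≤ j ∧ j + (n : ℤ) ≤ -(N : ℤ) + ((2 * N + 1 : ℕ) : ℤ) := by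
    refine ⟨j.natAbs + n, by omega, by omega⟩
  exact lang_infix_closed (word_infix w hN1 hN2) (Set.mem_iInter.1 hw N)

lemma mem_closure_orbit [CompactSpace A] [T2Space A] [Nonempty A] {ρ : A → List A}
    (hρ : Continuous ρ) (h1 : ∀ a : A, 1 ≤ (ρ a).length) (hprim : Primitive ρ)
    (hnt : ¬ ∃ a : A, (∀ b : A, b = a) ∧ ρ a = [a])
    {y x : ℤ → A} (hy : y ∈ subshiftOf (lang ρ)) (hx : x ∈ subshiftOf (lang ρ)) :
    x ∈ closure (orbit y) := by
  rw [mem_closure_iff_nhds]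
  intro tt htt
  rw [nhds_pi, Filter.mem_pi'] at htt
  obtain ⟨I, V, hV, hVsub⟩ := htt
  set n : ℕ := I.sup (fun i => i.natAbs) with hn
  set L := 2 * n + 1 with hL
  have hu0 : word x (-(n : ℤ)) L ∈ lang ρ := hx _ _
  set V' : ℤ → Set A := fun i => if i ∈ I then interior (V i) else Set.univ with hV'
  have hV'open : ∀ i, IsOpen (V' i) := by
    intro i
    simp only [hV']
    by_cases h : i ∈ I
    · rw [if_pos h]; exact isOpen_interior
    · rw [if_neg h]; exact isOpen_univ
  have hxV' : ∀ i, x i ∈ V' i := by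
    intro i
    simp only [hV']
    by_cases h : i ∈ I
    · rw [if_pos h]; exact mem_interior_iff_mem_nhds.2 (hV i)
    · rw [if_neg h]; trivial
  have hV'V : ∀ i ∈ I, V' i ⊆ V i := by
    intro i hi
    simp only [hV']
    rw [if_pos hi]
    exact interior_subset
  set Vs : List (Set A) := (List.range L).map (fun m : ℕ => V' (-(n : ℤ) + (m : ℤ))) with hVs
  have hVslen : Vs.length = L := by rw [hVs, List.length_map, List.length_range]
  have hVsget : ∀ (i : ℕ) (h2 : i < Vs.length), Vs.get ⟨i, h2⟩ = V' (-(n : ℤ) + i) := by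
    intro i h2
    show ((List.range L).map (fun m : ℕ => V' (-(n : ℤ) + (m : ℤ)))).get ⟨i, h2⟩ = _
    rw [List.get_eq_getElem, List.getElem_map, List.getElem_range]
  have hforall : List.Forall₂ (fun z V => z ∈ V ∧ IsOpen V) (word x (-(n : ℤ)) L) Vs := by
    rw [List.forall₂_iff_get]
    refine ⟨by rw [word_length, hVslen], fun i h1' h2' => ?_⟩
    rw [word_get, hVsget i h2']
    exact ⟨hxV' _, hV'open _⟩
  unfold lang at hu0
  rw [mem_closure_list] at hu0
  obtain ⟨u'', hu''G, hu''Vs⟩ := hu0 Vs hforall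
  have hu''len : u''.length = L := by rw [(mem_cyl.1 hu''Vs).length_eq, hVslen]
  have hforall'' : List.Forall₂ (fun z V => z ∈ V ∧ IsOpen V) u'' Vs := by
    rw [List.forall₂_iff_get]
    refine ⟨(mem_cyl.1 hu''Vs).length_eq, fun i hh1 hh2 => ?_⟩
    refine ⟨(List.forall₂_iff_get.1 (mem_cyl.1 hu''Vs)).2 i hh1 hh2, ?_⟩
    rw [hVsget i hh2]
    exact hV'open _
  obtain ⟨j, hj⟩ := key hρ h1 hprim hnt hy hu''G hforall''
  rw [hu''len] at hj
  refine ⟨fun i => y (i + (j + n)), ?_, ⟨j + n, rfl⟩⟩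
  apply hVsub
  intro i hiI
  have hiI' : i ∈ I := hiI
  have hile : i.natAbs ≤ n := Finset.le_sup (f := fun i : ℤ => i.natAbs) hiI'
  set m : ℕ := (i + n).toNat with hm
  have hmL : m < L := by omega
  have hieq : i = -(n : ℤ) + m := by omega
  have hg := (List.forall₂_iff_get.1 (mem_cyl.1 hj)).2 m
    (by rw [word_length]; omega) (by rw [hVslen]; omega)
  rw [word_get, hVsget m (by rw [hVslen]; omega)] at hg
  show y (i + (j + (n : ℤ))) ∈ V i
  have h6 : y (i + (j + (n : ℤ))) = y (j + m) := by congr 1; omega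
  rw [h6]
  apply hV'V i hiI'
  rw [hieq]
  exact hg

end Main

end Stmt13Aux

/-- If `ρ` is a primitive continuous substitution on a (non-empty) compact Hausdorff
alphabet, not the trivial one-letter substitution, then `X_ρ` is a minimal subshift. -/
theorem stmt13 {A : Type*} [TopologicalSpace A] [CompactSpace A] [T2Space A] [Nonempty A]
    (ρ : A → List A) (hρ : Continuous ρ) (h1 : ∀ a : A, 1 ≤ (ρ a).length)
    (hprim : Primitive ρ)
    (hnt : ¬ ∃ a : A, (∀ b : A, b = a) ∧ ρ a = [a]) :
    (subshiftOf (lang ρ)).Nonempty ∧ IsClosed (subshiftOf (lang ρ)) ∧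
    shift '' subshiftOf (lang ρ) = subshiftOf (lang ρ) ∧
    ∀ Y ⊆ subshiftOf (lang ρ), Y.Nonempty → IsClosed Y → shift '' Y = Y →
      Y = subshiftOf (lang ρ) := by
  refine ⟨Stmt13Aux.nonempty_subshift hρ h1 hprim hnt, Stmt13Aux.isClosed_subshift ρ,
    Stmt13Aux.shift_image ρ, ?_⟩
  intro Y hYX hYne hYcl hYsh
  obtain ⟨y, hy⟩ := hYne
  apply Set.Subset.antisymm hYX
  intro x hx
  have hclos : x ∈ closure (orbit y) :=
    Stmt13Aux.mem_closure_orbit hρ h1 hprim hnt (hYX hy) hx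
  exact closure_minimal (Stmt13Aux.orbit_subset_invariant hYsh hy) hYcl hclos
end

section
/- If ρ is a primitive substitution and U ⊆ L^n(ρ) is a non-empty open set of legal n-letter words, then there exists p ≥ 0 such that for every a ∈ A, some subword of ρ^p(a) lies in U. -/
open Filter Topology

section ListTopologyHelpers

variable {α : Type*} [TopologicalSpace α]

theorem nhds_cons_eq_map (a : α) (l : List α) :
    𝓝 (a :: l) = (𝓝 a ×ˢ 𝓝 l).map fun p : α × List α => p.1 :: p.2 := by
  simp only [nhds_cons, Filter.prod_eq, (Filter.map_def _ _).symm,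
    (Filter.seq_eq_filter_seq _ _).symm]
  simp [-Filter.map_def, Function.comp_def, functor_norm]

theorem my_tendsto_append {β : Type*} {b : Filter β} :
    ∀ (l₁ : List α) {l₂ : List α} {f g : β → List α},
      Filter.Tendsto f b (𝓝 l₁) → Filter.Tendsto g b (𝓝 l₂) →
      Filter.Tendsto (fun x => f x ++ g x) b (𝓝 (l₁ ++ l₂))
  | [], l₂, f, g, hf, hg => by
      rw [nhds_nil] at hf
      have h : ∀ᶠ x in b, f x = [] := hf (by simp : {w : List α | w = []} ∈ pure ([] : List α))
      refine Filter.Tendsto.congr' ?_ hg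
      filter_upwards [h] with x hx
      simp [hx]
  | a :: l₁, l₂, f, g, hf, hg => by
      have hmem : {w : List α | w ≠ []} ∈ 𝓝 (a :: l₁) := by
        rw [nhds_cons_eq_map, Filter.mem_map]
        exact Filter.mem_of_superset Filter.univ_mem (fun p _ => by simp)
      haveI : Inhabited α := ⟨a⟩
      have hne : ∀ᶠ x in b, f x ≠ [] := hf hmem
      have hhead : Filter.Tendsto (fun x => (f x).headI) b (𝓝 a) := by
        have h' : Filter.Tendsto List.headI (𝓝 (a :: l₁)) (𝓝 a) := by
          rw [nhds_cons_eq_map, Filter.tendsto_map'_iff]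
          exact Filter.tendsto_fst
        exact h'.comp hf
      have htail : Filter.Tendsto (fun x => (f x).tail) b (𝓝 l₁) := by
        have h' : Filter.Tendsto List.tail (𝓝 (a :: l₁)) (𝓝 l₁) := by
          rw [nhds_cons_eq_map, Filter.tendsto_map'_iff]
          exact Filter.tendsto_snd
        exact h'.comp hf
      have hmain := Filter.Tendsto.cons hhead (my_tendsto_append l₁ htail hg)
      refine Filter.Tendsto.congr' ?_ hmain
      filter_upwards [hne] with x hx
      cases hfx : f x with
      | nil => exact absurd hfx hx
      | cons y ys => simp [hfx]

theorem my_tendsto_flatMap {ρ : α → List α} (hρ : Continuous ρ) :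
    ∀ l : List α, Filter.Tendsto (fun w : List α => w.flatMap ρ) (𝓝 l) (𝓝 (l.flatMap ρ))
  | [] => by rw [nhds_nil]; exact tendsto_pure_nhds _ _
  | a :: l => by
      rw [nhds_cons_eq_map, Filter.tendsto_map'_iff]
      simp only [List.flatMap_cons]
      exact my_tendsto_append _ ((hρ.tendsto a).comp Filter.tendsto_fst)
        ((my_tendsto_flatMap hρ l).comp Filter.tendsto_snd)

theorem my_continuous_flatMap {ρ : α → List α} (hρ : Continuous ρ) :
    Continuous (fun w : List α => w.flatMap ρ) :=
  continuous_iff_continuousAt.2 fun l => my_tendsto_flatMap hρ l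

theorem my_tendsto_take : ∀ (m : ℕ) (l : List α),
    Filter.Tendsto (List.take m) (𝓝 l) (𝓝 (l.take m))
  | 0, l => by
      simp only [List.take_zero]
      exact Filter.Tendsto.congr (fun w => (List.take_zero).symm) tendsto_const_nhds
  | m + 1, [] => by rw [nhds_nil]; exact tendsto_pure_nhds _ _
  | m + 1, a :: l => by
      rw [nhds_cons_eq_map, Filter.tendsto_map'_iff]
      simp only [List.take_succ_cons]
      exact Filter.Tendsto.cons Filter.tendsto_fst
        ((my_tendsto_take m l).comp Filter.tendsto_snd)

theorem my_tendsto_drop : ∀ (m : ℕ) (l : List α),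
    Filter.Tendsto (List.drop m) (𝓝 l) (𝓝 (l.drop m))
  | 0, l => by
      simp only [List.drop_zero]
      exact Filter.Tendsto.congr (fun w => (List.drop_zero).symm) tendsto_id
  | m + 1, [] => by rw [nhds_nil]; exact tendsto_pure_nhds _ _
  | m + 1, a :: l => by
      rw [nhds_cons_eq_map, Filter.tendsto_map'_iff]
      simp only [List.drop_succ_cons]
      exact (my_tendsto_drop m l).comp Filter.tendsto_snd

theorem my_continuous_take (m : ℕ) : Continuous (List.take m : List α → List α) :=
  continuous_iff_continuousAt.2 fun l => my_tendsto_take m l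

theorem my_continuous_drop (m : ℕ) : Continuous (List.drop m : List α → List α) :=
  continuous_iff_continuousAt.2 fun l => my_tendsto_drop m l

theorem my_continuous_length : Continuous (List.length : List α → ℕ) :=
  continuous_iff_continuousAt.2 fun l => List.continuousAt_length l

end ListTopologyHelpers

theorem my_continuous_iterate {α : Type*} [TopologicalSpace α] {f : α → α}
    (hf : Continuous f) : ∀ m : ℕ, Continuous (f^[m])
  | 0 => continuous_id
  | m + 1 => by rw [Function.iterate_succ]; exact (my_continuous_iterate hf m).comp hf

theorem substWord_infix {A : Type*} (ρ : A → List A) {u v : List A} (h : u <:+: v) :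
    substWord ρ u <:+: substWord ρ v := by
  obtain ⟨s, t, rfl⟩ := h
  exact ⟨substWord ρ s, substWord ρ t, by simp [substWord]⟩

theorem substWord_iterate_infix {A : Type*} (ρ : A → List A) (k : ℕ) {u v : List A}
    (h : u <:+: v) : (substWord ρ)^[k] u <:+: (substWord ρ)^[k] v := by
  induction k generalizing u v with
  | zero => simpa using h
  | succ m ih =>
      rw [Function.iterate_succ_apply, Function.iterate_succ_apply]
      exact ih (substWord_infix ρ h)

/-- If `ρ` is primitive and `U = V ∩ L^n(ρ)` is a non-empty relatively open set of legal
`n`-letter words, then there is `p ≥ 0` such that every `ρ^p(a)` contains a subword in `U`. -/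
theorem stmt14 {A : Type*} [TopologicalSpace A] [CompactSpace A] [T2Space A]
    (ρ : A → List A) (hρ : Continuous ρ) (h1 : ∀ a : A, 1 ≤ (ρ a).length)
    (hprim : Primitive ρ) (n : ℕ) (V : Set (List A)) (hV : IsOpen V)
    (hne : (V ∩ langN ρ n).Nonempty) :
    ∃ p : ℕ, ∀ a : A, ∃ u ∈ V ∩ langN ρ n, u <:+: substIter ρ p a := by
  classical
  obtain ⟨u, huV, huL⟩ := hne
  obtain ⟨u₀, hu₀V, hu₀len, a₀, k, hinf⟩ :
      ∃ u₀, u₀ ∈ V ∧ u₀.length = n ∧ ∃ (a : A) (k : ℕ), u₀ <:+: substIter ρ k a := by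
    obtain ⟨u₀, hu₀V, hu₀S⟩ := mem_closure_iff_nhds.1 huL V (hV.mem_nhds huV)
    exact ⟨u₀, hu₀V, hu₀S.1, hu₀S.2⟩
  -- the continuous map sending a letter to its level-`k` supertile
  set g : A → List A := fun b => substIter ρ k b with hg
  have hgcont : Continuous g := by
    have hsingle : Continuous (fun b : A => [b]) :=
      List.continuous_cons.comp (continuous_id.prodMk continuous_const)
    have hsub : Continuous (substWord ρ) := my_continuous_flatMap hρ
    exact (my_continuous_iterate hsub k).comp hsingle
  -- the open set of supertiles containing an infix in `V`
  set T : Set (List A) := ⋃ j : ℕ, {w : List A | j + n ≤ w.length ∧ (w.drop j).take n ∈ V}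
    with hT
  have hTopen : IsOpen T := by
    refine isOpen_iUnion fun j => ?_
    have hlen : IsOpen {w : List A | j + n ≤ w.length} :=
      (isOpen_discrete {m : ℕ | j + n ≤ m}).preimage my_continuous_length
    have hslice : IsOpen {w : List A | (w.drop j).take n ∈ V} :=
      hV.preimage ((my_continuous_take n).comp (my_continuous_drop j))
    exact hlen.inter hslice
  have hmemT : g a₀ ∈ T := by
    obtain ⟨s, t, hst⟩ := hinf
    refine Set.mem_iUnion.2 ⟨s.length, ?_, ?_⟩
    · show s.length + n ≤ (g a₀).length
      rw [hg]; dsimp only; rw [← hst]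
      simp [hu₀len]
    · show ((g a₀).drop s.length).take n ∈ V
      rw [hg]; dsimp only; rw [← hst]
      have hd : (s ++ u₀ ++ t).drop s.length = u₀ ++ t := by
        rw [List.append_assoc, List.drop_left]
      rw [hd, ← hu₀len, List.take_left]
      exact hu₀V
  obtain ⟨p₀, hp₀⟩ := hprim (g ⁻¹' T) (hTopen.preimage hgcont) ⟨a₀, hmemT⟩
  refine ⟨k + p₀, fun a => ?_⟩
  obtain ⟨b, hb_mem, hbW⟩ := hp₀ a
  obtain ⟨j, hjlen, hjV⟩ : ∃ j : ℕ, j + n ≤ (g b).length ∧ ((g b).drop j).take n ∈ V := by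
    obtain ⟨s, hs, hmem⟩ := Set.mem_iUnion.1 hbW
    exact ⟨s, hs, hmem⟩
  set u' : List A := ((g b).drop j).take n with hu'
  have hulen : u'.length = n := by
    rw [hu']
    rw [List.length_take, List.length_drop]
    omega
  have huinf : u' <:+: g b :=
    (List.take_prefix n _).isInfix.trans (List.drop_suffix j _).isInfix
  have hu'L : u' ∈ langN ρ n := subset_closure ⟨hulen, b, k, huinf⟩
  have hbinf : [b] <:+: substIter ρ p₀ a := by
    obtain ⟨s, t, hst⟩ := List.append_of_mem hb_mem
    exact ⟨s, t, by rw [hst]; simp⟩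
  refine ⟨u', ⟨hjV, hu'L⟩, huinf.trans ?_⟩
  have hmono := substWord_iterate_infix ρ k hbinf
  show g b <:+: substIter ρ (k + p₀) a
  rw [hg]; dsimp only
  unfold substIter at hmono ⊢
  rwa [Function.iterate_add_apply]
end

section
/- Any set-theoretic substitution ρ: S → S^+ of bounded length on an arbitrary set S extends to a continuous substitution on a compact Hausdorff alphabet: there is a compact Hausdorff space A, a dense embedding ι: S ↪ A onto the set of isolated points of A, and a continuous ρ̄: A → A^+ with ρ̄(ι a) = ι ρ(a) for all a ∈ S. -/
open Filter Topology

universe u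

/-! Take `A = βS`. Words of length at most `L` over a compact Hausdorff alphabet form the compact
Hausdorff space `Σ n ≤ L, Aⁿ`, so `s ↦ ι (ρ s)` extends to `βS` by the universal property. The
length of the extension is locally constant, hence only takes values already attained on the dense
image of `S`. Points of `S` are isolated in `βS` because `S` is discrete and dense in `βS`. -/

theorem continuous_list_ofFn {Y : Type*} [TopologicalSpace Y] (n : ℕ) :
    Continuous (List.ofFn : (Fin n → Y) → List Y) := by
  induction n with
  | zero => exact continuous_const.congr fun _ => List.ofFn_zero.symm
  | succ n ih =>
    exact (List.continuous_cons.comp ((continuous_apply 0).prodMk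
      (ih.comp (continuous_pi fun i => continuous_apply i.succ)))).congr fun _ => List.ofFn_succ.symm

theorem IsDenseInducing.range_eq_setOf_isOpen_singleton {α β : Type*} [TopologicalSpace α]
    [DiscreteTopology α] [TopologicalSpace β] [T1Space β] {e : α → β} (he : IsDenseInducing e) :
    Set.range e = {b | IsOpen ({b} : Set β)} := by
  refine Set.Subset.antisymm ?_ fun b hb => he.dense.exists_mem_open hb ⟨b, rfl⟩
  rintro _ ⟨a, rfl⟩
  obtain ⟨V, hV, hVa⟩ := he.isInducing.isOpen_iff.1 (isOpen_discrete {a})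
  have haV : e a ∈ V := by simp [← Set.mem_preimage, hVa]
  show IsOpen {e a}
  suffices hVe : V ⊆ {e a} from hVe.antisymm (Set.singleton_subset_iff.2 haV) ▸ hV
  intro x hxV
  by_contra hx
  obtain ⟨b, hbV, hb⟩ := he.dense.exists_mem_open (hV.sdiff isClosed_singleton) ⟨x, hxV, hx⟩
  have hba : b ∈ e ⁻¹' V := hbV
  rw [hVa] at hba
  exact hb (hba ▸ rfl)

theorem exists_continuous_stoneCech_list_extension {S Y : Type*} [TopologicalSpace S]
    [DiscreteTopology S] [TopologicalSpace Y] [CompactSpace Y] [T2Space Y] (f : S → List Y)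
    {L : ℕ} (hL : ∀ s, (f s).length ≤ L) :
    ∃ F : StoneCech S → List Y, Continuous F ∧ (∀ s, F (stoneCechUnit s) = f s) ∧
      ∀ a, ∃ s, (F a).length = (f s).length := by
  let g : S → Σ n : Fin (L + 1), Fin n → Y :=
    fun s => ⟨⟨(f s).length, Nat.lt_succ_of_le (hL s)⟩, (f s).get⟩
  have hg : Continuous g := continuous_of_discreteTopology
  have hG := continuous_stoneCechExtend hg
  refine ⟨fun a => List.ofFn (stoneCechExtend hg a).2,
    (continuous_sigma (f := fun p : Σ n : Fin (L + 1), Fin n → Y => List.ofFn p.2)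
      fun n => continuous_list_ofFn n).comp hG, fun s => ?_, fun a => ?_⟩
  · dsimp only
    rw [stoneCechExtend_stoneCechUnit hg s]
    exact List.ofFn_get (f s)
  · have hfst : ∀ a, (stoneCechExtend hg a).1 ∈ Set.range fun s => (g s).1 :=
      isClosed_property denseRange_stoneCechUnit
        ((isClosed_discrete _).preimage ((continuous_sigma fun _ => continuous_const).comp hG))
        fun s => ⟨s, by rw [stoneCechExtend_stoneCechUnit]⟩
    obtain ⟨s, hs⟩ := hfst a
    exact ⟨s, by simp [← hs, g]⟩

/-- Any set-theoretic substitution of bounded length on a discrete set `S` extends to a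
continuous substitution on a compact Hausdorff alphabet in which `S` embeds densely as the
set of isolated points. -/
theorem stmt15 {S : Type u} (ρ : S → List S) (L : ℕ)
    (h1 : ∀ s : S, 1 ≤ (ρ s).length) (hL : ∀ s : S, (ρ s).length ≤ L) :
    ∃ (A : Type u) (tA : TopologicalSpace A) (ι : S → A) (ρb : A → List A),
      @CompactSpace A tA ∧ @T2Space A tA ∧ Function.Injective ι ∧
      @DenseRange A tA S ι ∧
      Set.range ι = {a : A | @IsOpen A tA {a}} ∧
      @Continuous A (List A) tA (@instTopologicalSpaceList A tA) ρb ∧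
      (∀ s : S, ρb (ι s) = (ρ s).map ι) ∧
      ∀ a : A, 1 ≤ (ρb a).length ∧ (ρb a).length ≤ L := by
  let : TopologicalSpace S := ⊥
  have : DiscreteTopology S := ⟨rfl⟩
  obtain ⟨ρb, hρb, hext, hlen⟩ := exists_continuous_stoneCech_list_extension
    (fun s => (ρ s).map (stoneCechUnit : S → StoneCech S)) (L := L) (by simpa using hL)
  refine ⟨StoneCech S, inferInstance, stoneCechUnit, ρb, inferInstance, inferInstance,
    injective_stoneCechUnit_of_t35Space, denseRange_stoneCechUnit,
    isDenseInducing_stoneCechUnit.range_eq_setOf_isOpen_singleton, hρb, hext, fun a => ?_⟩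
  obtain ⟨s, hs⟩ := hlen a
  rw [hs, List.length_map]
  exact ⟨h1 s, hL s⟩
end

section
/- The substitution ρ is primitive if and only if its substitution operator M is strongly positive: for every non-zero f in the positive cone K of C(A, ℝ) there exists p ∈ ℕ with (M^p f)(a) > 0 for all a ∈ A. -/
open Filter Topology

/-
For `f ≥ 0`, `(M^p f)(a) > 0` says exactly that some letter of `ρ^p(a)` lies in the open set
`{f > 0}`. These sets, for continuous `f ≥ 0` with `f ≠ 0`, are non-empty, and by complete
regularity every non-empty open set contains one of them.
-/

theorem List.sum_map_pos_iff {α M : Type*} [AddCommMonoid M] [PartialOrder M]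
    [IsOrderedAddMonoid M] {f : α → M} {l : List α} (hf : ∀ a ∈ l, 0 ≤ f a) :
    0 < (l.map f).sum ↔ ∃ a ∈ l, 0 < f a := by
  constructor
  · intro hpos
    by_contra! hle
    have hzero : (l.map f).sum = 0 :=
      List.sum_eq_zero fun x hx => by
        obtain ⟨a, ha, rfl⟩ := List.mem_map.mp hx
        exact ((hf a ha).eq_of_not_lt (hle a ha)).symm
    exact hpos.ne' hzero
  · rintro ⟨a, ha, hfa⟩
    have hnonneg : ∀ x ∈ l.map f, 0 ≤ x := by
      simpa only [List.forall_mem_map] using hf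
    exact hfa.trans_le (List.single_le_sum hnonneg _ (List.mem_map_of_mem ha))

theorem ContinuousMap.exists_pos_of_nonneg_of_ne_zero {X : Type*} [TopologicalSpace X]
    {f : C(X, ℝ)} (hf : ∀ x, 0 ≤ f x) (hne : f ≠ 0) : ∃ x, 0 < f x := by
  by_contra! hle
  exact hne (ContinuousMap.ext fun x => le_antisymm (hle x) (hf x))

theorem exists_continuous_nonneg_ne_zero_support_subset {X : Type*} [TopologicalSpace X]
    [CompletelyRegularSpace X] {U : Set X} (hU : IsOpen U) (hne : U.Nonempty) :
    ∃ f : C(X, ℝ), (∀ x, 0 ≤ f x) ∧ f ≠ 0 ∧ Function.support f ⊆ U := by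
  obtain ⟨x₀, hx₀⟩ := hne
  obtain ⟨g, hg, hgx₀, hgU⟩ := CompletelyRegularSpace.completely_regular_isOpen x₀ U hU hx₀
  refine ⟨⟨fun x => 1 - (g x : ℝ), by fun_prop⟩, fun x => sub_nonneg.mpr (g x).2.2, ?_, ?_⟩
  · intro h
    simpa [hgx₀] using congrArg (fun f : C(X, ℝ) => f x₀) h
  · intro x hx
    by_contra hxU
    exact hx (by simp [hgU hxU])

theorem stmt16_general {A : Type*} [TopologicalSpace A] [CompactSpace A] [T2Space A]
    (ρ : A → List A) :
    Primitive ρ ↔ ∀ f : C(A, ℝ), (∀ a : A, 0 ≤ f a) → f ≠ 0 →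
      ∃ p : ℕ, ∀ a : A, 0 < ((substIter ρ p a).map (fun b => f b)).sum := by
  constructor
  · intro hprim f hf hne
    obtain ⟨p, hp⟩ := hprim _ (isOpen_Ioi.preimage f.continuous)
      (ContinuousMap.exists_pos_of_nonneg_of_ne_zero hf hne)
    exact ⟨p, fun a => (List.sum_map_pos_iff fun b _ => hf b).mpr (hp a)⟩
  · intro hpos U hU hne
    obtain ⟨f, hf, hf0, hfU⟩ := exists_continuous_nonneg_ne_zero_support_subset hU hne
    obtain ⟨p, hp⟩ := hpos f hf hf0
    refine ⟨p, fun a => ?_⟩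
    obtain ⟨b, hb, hfb⟩ := (List.sum_map_pos_iff fun b _ => hf b).mp (hp a)
    exact ⟨b, hb, hfU hfb.ne'⟩

/-- `ρ` is primitive iff its substitution operator `M` is strongly positive: for every
non-zero `f ≥ 0` in `C(A, ℝ)` there is `p` with `(M^p f)(a) = Σ_{b ◁ ρ^p(a)} f(b) > 0` for
all `a ∈ A`. -/
theorem stmt16 {A : Type*} [TopologicalSpace A] [CompactSpace A] [T2Space A]
    (ρ : A → List A) (hρ : Continuous ρ) (h1 : ∀ a : A, 1 ≤ (ρ a).length) :
    Primitive ρ ↔ ∀ f : C(A, ℝ), (∀ a : A, 0 ≤ f a) → f ≠ 0 →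
      ∃ p : ℕ, ∀ a : A, 0 < ((substIter ρ p a).map (fun b => f b)).sum :=
  stmt16_general ρ
end

section
/- A substitution ρ on a compact Hausdorff alphabet cannot be restricted to a proper non-empty closed subalphabet if and only if its substitution operator M is ideal irreducible on C(A, ℝ): the only closed M-invariant lattice ideals are {0} and C(A, ℝ). -/
open Filter Topology

/-- A substitution cannot be restricted to a proper non-empty closed subalphabet iff its
substitution operator `M` is ideal irreducible on `C(A, ℝ)`: using the bijective
correspondence between closed lattice ideals of `C(A, ℝ)` and closed subsets `C ⊆ A` via
`I_C = {f | f ≡ 0 on C}`, the only closed `M`-invariant ideals are `{0}` (i.e. `C = A`) and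
`C(A, ℝ)` (i.e. `C = ∅`). -/
theorem stmt17 {A : Type*} [TopologicalSpace A] [CompactSpace A] [T2Space A]
    (ρ : A → List A) (hρ : Continuous ρ) (h1 : ∀ a : A, 1 ≤ (ρ a).length) :
    (∀ C : Set A, IsClosed C → C.Nonempty → (∀ c ∈ C, ∀ b ∈ ρ c, b ∈ C) → C = Set.univ) ↔
    (∀ C : Set A, IsClosed C →
      (∀ f : C(A, ℝ), (∀ c ∈ C, f c = 0) → ∀ c ∈ C, ((ρ c).map (fun b => f b)).sum = 0) →
      C = ∅ ∨ C = Set.univ) := by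
  constructor
  · intro H C hC hinv
    by_cases hne : C.Nonempty
    · right
      apply H C hC hne
      intro c hc b hb
      by_contra hbC
      obtain ⟨f, hf0, hf1, hf01⟩ := exists_continuous_zero_one_of_isClosed hC
        isClosed_singleton (by simpa [Set.disjoint_singleton_right] using hbC)
      have hsum0 := hinv f (fun c hc => hf0 hc) c hc
      have hmem : f b ∈ (ρ c).map (fun b => f b) := List.mem_map_of_mem hb
      have hfb : f b = 1 := hf1 rfl
      have hle : f b ≤ ((ρ c).map fun b => f b).sum := by
        apply List.single_le_sum _ _ hmem
        intro x hx
        obtain ⟨a, _, rfl⟩ := List.mem_map.mp hx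
        exact (hf01 a).1
      rw [hsum0, hfb] at hle
      linarith
    · left
      exact Set.not_nonempty_iff_eq_empty.mp hne
  · intro H C hC hne hinv
    have key : ∀ f : C(A, ℝ), (∀ c ∈ C, f c = 0) → ∀ c ∈ C,
        ((ρ c).map (fun b => f b)).sum = 0 := by
      intro f hf c hc
      apply List.sum_eq_zero
      intro x hx
      obtain ⟨b, hb, rfl⟩ := List.mem_map.mp hx
      exact hf b (hinv c hc b hb)
    rcases H C hC key with h | h
    · exact absurd h (Set.nonempty_iff_ne_empty.mp hne)
    · exact h
end

section
/- For the substitution operator M of a continuous substitution on a compact Hausdorff alphabet, the spectral radius r satisfies min_{a∈A} |ρ^n(a)| ≤ r^n ≤ max_{a∈A} |ρ^n(a)| for all n ≥ 1; in particular r ≥ 1. Moreover ‖M^n‖ = max_a |ρ^n(a)|. -/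
open Filter Topology

set_option linter.unusedVariables false in
set_option linter.unnecessarySimpa false in
lemma iter_flatMap {A : Type*} (ρ : A → List A) (n : ℕ) (u : List A) :
    (substWord ρ)^[n] u = u.flatMap (substIter ρ n) := by
  induction n generalizing u with
  | zero =>
    simp only [substIter, Function.iterate_zero_apply]
    exact (List.flatMap_singleton' u).symm
  | succ n ih =>
    rw [Function.iterate_succ_apply', ih]
    show (u.flatMap (substIter ρ n)).flatMap ρ = _
    rw [List.flatMap_assoc]
    congr 1
    funext a
    rw [show substIter ρ (n+1) a = substWord ρ ((substWord ρ)^[n] [a]) from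
      Function.iterate_succ_apply' _ _ _]
    rfl

lemma iter_add {A : Type*} (ρ : A → List A) (m n : ℕ) (a : A) :
    substIter ρ (m + n) a = (substIter ρ n a).flatMap (substIter ρ m) := by
  rw [substIter, Function.iterate_add_apply, iter_flatMap]
  rfl

lemma iter_succ {A : Type*} (ρ : A → List A) (n : ℕ) (a : A) :
    substIter ρ (n + 1) a = (substIter ρ n a).flatMap ρ := by
  rw [substIter, Function.iterate_succ_apply']
  rfl

lemma Mpow_apply {A : Type*} [TopologicalSpace A] [CompactSpace A]
    (ρ : A → List A) (M : C(A, ℝ) →L[ℝ] C(A, ℝ))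
    (hM : ∀ (f : C(A, ℝ)) (a : A), M f a = ((ρ a).map (fun b => f b)).sum)
    (n : ℕ) (f : C(A, ℝ)) (a : A) :
    (M ^ n) f a = ((substIter ρ n a).map (fun b => f b)).sum := by
  induction n generalizing f a with
  | zero => simp [substIter]
  | succ n ih =>
    rw [pow_succ, ContinuousLinearMap.mul_apply]
    rw [ih (M f), iter_succ, List.map_flatMap]
    rw [List.flatMap_def, List.sum_flatten, List.map_map]
    exact congrArg List.sum (List.map_congr_left fun b _ => hM f b)

lemma list_norm_sum_le (l : List ℝ) : ‖l.sum‖ ≤ (l.map (fun x => ‖x‖)).sum := by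
  induction l with
  | nil => simp
  | cons x l ih =>
    simp only [List.sum_cons, List.map_cons]
    exact (norm_add_le _ _).trans (by linarith)

/-- For the substitution operator `M` of a continuous substitution on a compact Hausdorff
alphabet, the spectral radius `r` (given by Gelfand's formula `r = lim ‖M^n‖^{1/n}`)
satisfies `min_a |ρ^n(a)| ≤ r^n ≤ max_a |ρ^n(a)|` for all `n ≥ 1`; in particular `r ≥ 1`.
Moreover `‖M^n‖ = max_a |ρ^n(a)|`. -/
theorem stmt18 {A : Type*} [TopologicalSpace A] [CompactSpace A] [T2Space A] [Nonempty A]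
    (ρ : A → List A) (hρ : Continuous ρ) (h1 : ∀ a : A, 1 ≤ (ρ a).length)
    (M : C(A, ℝ) →L[ℝ] C(A, ℝ))
    (hM : ∀ (f : C(A, ℝ)) (a : A), M f a = ((ρ a).map (fun b => f b)).sum)
    (r : ℝ)
    (hr : Tendsto (fun n : ℕ => ‖M ^ n‖ ^ (1 / (n : ℝ))) atTop (nhds r)) :
    (∀ n : ℕ, 1 ≤ n →
      (⨅ a : A, ((substIter ρ n a).length : ℝ)) ≤ r ^ n ∧
      r ^ n ≤ ⨆ a : A, ((substIter ρ n a).length : ℝ)) ∧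
    1 ≤ r ∧
    ∀ n : ℕ, ‖M ^ n‖ = ⨆ a : A, ((substIter ρ n a).length : ℝ) := by
  have key := Mpow_apply ρ M hM
  set L : ℕ → A → ℝ := fun n a => ((substIter ρ n a).length : ℝ) with hLdef
  have L0 : ∀ n a, 0 ≤ L n a := fun n a => Nat.cast_nonneg _
  have hg : ∀ (n : ℕ) (a : A), (M ^ n) (1 : C(A, ℝ)) a = L n a := by
    intro n a
    rw [key]
    simp [hLdef, List.map_const', List.sum_replicate, nsmul_eq_mul]
  have hbdd : ∀ n, BddAbove (Set.range (L n)) := by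
    intro n
    refine ⟨‖(M ^ n) (1 : C(A, ℝ))‖, ?_⟩
    rintro x ⟨a, rfl⟩
    calc L n a = (M ^ n) (1 : C(A, ℝ)) a := (hg n a).symm
      _ ≤ ‖(M ^ n) (1 : C(A, ℝ)) a‖ := le_abs_self _
      _ ≤ ‖(M ^ n) (1 : C(A, ℝ))‖ := ContinuousMap.norm_coe_le_norm _ a
  have hbddb : ∀ n, BddBelow (Set.range (L n)) := by
    intro n
    exact ⟨0, by rintro x ⟨a, rfl⟩; exact L0 n a⟩
  -- the norm formula
  have hnorm : ∀ n : ℕ, ‖M ^ n‖ = ⨆ a, L n a := by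
    intro n
    have h1' : ‖(M ^ n) (1 : C(A, ℝ))‖ = ⨆ a, L n a := by
      rw [ContinuousMap.norm_eq_iSup_norm]
      exact iSup_congr fun a => by
        rw [hg, Real.norm_eq_abs, abs_of_nonneg (L0 n a)]
    refine le_antisymm ?_ ?_
    · rw [← h1']
      refine ContinuousLinearMap.opNorm_le_bound _ (norm_nonneg _) fun f => ?_
      refine (ContinuousMap.norm_le _ (by positivity)).mpr fun a => ?_
      have hsum : ‖((substIter ρ n a).map (fun b => f b)).sum‖ ≤
          ((substIter ρ n a).map (fun b => ‖f b‖)).sum := by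
        simpa [List.map_map, Function.comp_def] using
          list_norm_sum_le ((substIter ρ n a).map (fun b => f b))
      calc ‖(M ^ n) f a‖ = ‖((substIter ρ n a).map (fun b => f b)).sum‖ := by rw [key]
        _ ≤ ((substIter ρ n a).map (fun b => ‖f b‖)).sum := hsum
        _ ≤ ((substIter ρ n a).map (fun b => ‖f b‖)).length • ‖f‖ := by
            refine List.sum_le_card_nsmul _ _ ?_
            intro x hx
            obtain ⟨b, -, rfl⟩ := List.mem_map.mp hx
            exact ContinuousMap.norm_coe_le_norm f b
        _ = L n a * ‖f‖ := by
            rw [List.length_map, nsmul_eq_mul]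
        _ ≤ ‖(M ^ n) (1 : C(A, ℝ))‖ * ‖f‖ := by
            refine mul_le_mul_of_nonneg_right ?_ (norm_nonneg f)
            rw [← hg n a]
            calc (M ^ n) (1 : C(A, ℝ)) a ≤ ‖(M ^ n) (1 : C(A, ℝ)) a‖ := le_abs_self _
              _ ≤ _ := ContinuousMap.norm_coe_le_norm _ a
    · rw [← h1']
      calc ‖(M ^ n) (1 : C(A, ℝ))‖ ≤ ‖M ^ n‖ * ‖(1 : C(A, ℝ))‖ :=
            ContinuousLinearMap.le_opNorm _ _
        _ = ‖M ^ n‖ := by rw [norm_one, mul_one]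
  -- additivity of lengths
  have hLadd : ∀ (m n : ℕ) (a : A), L (m + n) a = ((substIter ρ n a).map (L m)).sum := by
    intro m n a
    show ((substIter ρ (m + n) a).length : ℝ) = _
    rw [iter_add, List.length_flatMap, Nat.cast_list_sum, List.map_map]
    rfl
  -- main bound for each n ≥ 1
  have main : ∀ n : ℕ, 1 ≤ n → (⨅ a, L n a) ≤ r ^ n ∧ r ^ n ≤ ⨆ a, L n a := by
    intro n hn
    set cmin := ⨅ a, L n a with hcmin
    set cmax := ⨆ a, L n a with hcmax
    have cmin0 : 0 ≤ cmin := le_ciInf fun a => L0 n a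
    have cmax0 : 0 ≤ cmax :=
      (L0 n (Classical.arbitrary A)).trans (le_ciSup (hbdd n) _)
    have hcmin_le : ∀ a, cmin ≤ L n a := fun a => ciInf_le (hbddb n) a
    have hle_cmax : ∀ a, L n a ≤ cmax := fun a => le_ciSup (hbdd n) a
    have hiter : ∀ (k : ℕ) (a : A), cmin ^ k ≤ L (n * k) a ∧ L (n * k) a ≤ cmax ^ k := by
      intro k
      induction k with
      | zero =>
        intro a
        have : L 0 a = 1 := by simp [hLdef, substIter]
        simpa [this]
      | succ k ih =>
        intro a
        have hrw : L (n * (k + 1)) a = ((substIter ρ n a).map (L (n * k))).sum := by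
          rw [show n * (k + 1) = n * k + n by ring, hLadd]
        constructor
        · have hsum : (substIter ρ n a).length • (cmin ^ k) ≤
              ((substIter ρ n a).map (L (n * k))).sum := by
            have := List.card_nsmul_le_sum ((substIter ρ n a).map (L (n * k))) (cmin ^ k) ?_
            · simpa [List.length_map] using this
            · intro x hx
              obtain ⟨b, -, rfl⟩ := List.mem_map.mp hx
              exact (ih b).1
          calc cmin ^ (k + 1) = cmin * cmin ^ k := by ring
            _ ≤ L n a * cmin ^ k :=
              mul_le_mul_of_nonneg_right (hcmin_le a) (pow_nonneg cmin0 k)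
            _ = (substIter ρ n a).length • (cmin ^ k) := by
              rw [nsmul_eq_mul]
            _ ≤ _ := hrw ▸ hsum
        · have hsum : ((substIter ρ n a).map (L (n * k))).sum ≤
              (substIter ρ n a).length • (cmax ^ k) := by
            have := List.sum_le_card_nsmul ((substIter ρ n a).map (L (n * k))) (cmax ^ k) ?_
            · simpa [List.length_map] using this
            · intro x hx
              obtain ⟨b, -, rfl⟩ := List.mem_map.mp hx
              exact (ih b).2
          calc L (n * (k + 1)) a ≤ (substIter ρ n a).length • (cmax ^ k) := hrw ▸ hsum
            _ = L n a * cmax ^ k := by rw [nsmul_eq_mul]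
            _ ≤ cmax * cmax ^ k :=
              mul_le_mul_of_nonneg_right (hle_cmax a) (pow_nonneg cmax0 k)
            _ = cmax ^ (k + 1) := by ring
    have hnge : ∀ k : ℕ, cmin ^ k ≤ ‖M ^ (n * k)‖ := by
      intro k
      refine (hiter k (Classical.arbitrary A)).1.trans ?_
      rw [hnorm (n * k)]
      exact le_ciSup (hbdd (n * k)) _
    have hnle : ∀ k : ℕ, ‖M ^ (n * k)‖ ≤ cmax ^ k := by
      intro k
      rw [hnorm (n * k)]
      exact ciSup_le fun a => (hiter k a).2
    have hnpos : 0 < n := hn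
    have hφ : Tendsto (fun k : ℕ => n * k) atTop atTop :=
      tendsto_atTop_mono (fun k => Nat.le_mul_of_pos_left k hnpos) tendsto_id
    have htend : Tendsto (fun k : ℕ => (‖M ^ (n * k)‖ ^ (1 / ((n * k : ℕ) : ℝ))) ^ n)
        atTop (nhds (r ^ n)) := (hr.comp hφ).pow n
    have hev : ∀ k : ℕ, 1 ≤ k →
        cmin ≤ (‖M ^ (n * k)‖ ^ (1 / ((n * k : ℕ) : ℝ))) ^ n ∧
        (‖M ^ (n * k)‖ ^ (1 / ((n * k : ℕ) : ℝ))) ^ n ≤ cmax := by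
      intro k hk
      have hk0 : (k : ℝ) ≠ 0 := Nat.cast_ne_zero.mpr (by omega)
      have hn0 : (n : ℝ) ≠ 0 := Nat.cast_ne_zero.mpr (by omega)
      have x0 : (0 : ℝ) ≤ ‖M ^ (n * k)‖ := ContinuousLinearMap.opNorm_nonneg _
      have hexp : (‖M ^ (n * k)‖ ^ (1 / ((n * k : ℕ) : ℝ))) ^ n =
          ‖M ^ (n * k)‖ ^ (1 / (k : ℝ)) := by
        rw [← Real.rpow_natCast (‖M ^ (n * k)‖ ^ (1 / ((n * k : ℕ) : ℝ))) n,
          ← Real.rpow_mul x0]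
        congr 1
        push_cast
        field_simp
      rw [hexp]
      constructor
      · have : cmin = (cmin ^ k) ^ (1 / (k : ℝ)) := by
          rw [← Real.rpow_natCast cmin k, ← Real.rpow_mul cmin0, mul_one_div,
            div_self hk0, Real.rpow_one]
        rw [this]
        exact Real.rpow_le_rpow (pow_nonneg cmin0 k) (hnge k) (by positivity)
      · have : cmax = (cmax ^ k) ^ (1 / (k : ℝ)) := by
          rw [← Real.rpow_natCast cmax k, ← Real.rpow_mul cmax0, mul_one_div,
            div_self hk0, Real.rpow_one]
        rw [this]
        exact Real.rpow_le_rpow x0 (hnle k) (by positivity)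
    constructor
    · exact ge_of_tendsto htend (eventually_atTop.mpr ⟨1, fun k hk => (hev k hk).1⟩)
    · exact le_of_tendsto htend (eventually_atTop.mpr ⟨1, fun k hk => (hev k hk).2⟩)
  refine ⟨main, ?_, hnorm⟩
  have h1r := (main 1 le_rfl).1
  rw [pow_one] at h1r
  refine le_trans ?_ h1r
  refine le_ciInf fun a => ?_
  have : substIter ρ 1 a = ρ a := by simp [substIter, substWord]
  rw [hLdef]
  simp only [this]
  exact_mod_cast h1 a
end
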